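/- arXiv:1807.03277 — 8 statements merged into one kernel-verified Lean document; each statement's English description precedes it below -/
import Mathlib

section
/- Let ≺ ∈ IPos_m and ⋖ ∈ IPos_n be integer posets. Then underprod(≺,⋖) and overprod(≺,⋖) are integer posets, and (≺ ⧢ ⋖) ∩ IPos_{m+n} = {⊣ ∈ IPos_{m+n} : underprod(≺,⋖) ≼ ⊣ ≼ overprod(≺,⋖)}. -/
namespace IntegerRelations

/-- An integer relation of size `p` is a reflexive binary relation on `Fin p`,
encoded as a set of pairs; `IsIRel R` says that `R` is reflexive. -/
def IsIRel {p : ℕ} (R : Set (Fin p × Fin p)) : Prop :=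
  ∀ i : Fin p, (i, i) ∈ R

/-- The increasing subrelation `Inc R`. -/
def inc {p : ℕ} (R : Set (Fin p × Fin p)) : Set (Fin p × Fin p) :=
  {x ∈ R | x.1 < x.2}

/-- The decreasing subrelation `Dec R`. -/
def dec {p : ℕ} (R : Set (Fin p × Fin p)) : Set (Fin p × Fin p) :=
  {x ∈ R | x.2 < x.1}

/-- The weak order: `R ≼ S` iff `Inc R ⊇ Inc S` and `Dec R ⊆ Dec S`. -/
def WOle {p : ℕ} (R S : Set (Fin p × Fin p)) : Prop :=
  inc S ⊆ inc R ∧ dec R ⊆ dec S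

/-- Standardized restriction of a relation to a subset `X` of cardinality `k`. -/
def restrict {p k : ℕ} (R : Set (Fin p × Fin p)) (X : Finset (Fin p))
    (h : X.card = k) : Set (Fin k × Fin k) :=
  {x | ((X.orderIsoOfFin h x.1 : Fin p), (X.orderIsoOfFin h x.2 : Fin p)) ∈ R}

/-- Standardized restriction of a relation to the block of `k` consecutive
positions starting at offset `o` (`0`-indexed). -/
def restrictRange {p : ℕ} (R : Set (Fin p × Fin p)) (o k : ℕ) :
    Set (Fin k × Fin k) :=
  {x | ∃ (h₁ : o + (x.1 : ℕ) < p) (h₂ : o + (x.2 : ℕ) < p),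
      ((⟨o + (x.1 : ℕ), h₁⟩ : Fin p), (⟨o + (x.2 : ℕ), h₂⟩ : Fin p)) ∈ R}

/-- The relation `R` placed on the first `m` values of `[m+n]`. -/
def shiftL {m n : ℕ} (R : Set (Fin m × Fin m)) :
    Set (Fin (m + n) × Fin (m + n)) :=
  {x | ∃ y ∈ R, x = (Fin.castAdd n y.1, Fin.castAdd n y.2)}

/-- The relation `S` shifted to the last `n` values of `[m+n]`. -/
def shiftR {m n : ℕ} (S : Set (Fin n × Fin n)) :
    Set (Fin (m + n) × Fin (m + n)) :=
  {x | ∃ y ∈ S, x = (Fin.natAdd m y.1, Fin.natAdd m y.2)}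

/-- The full block `[m] × [n̄]`. -/
def lowHigh (m n : ℕ) : Set (Fin (m + n) × Fin (m + n)) :=
  {x | (x.1 : ℕ) < m ∧ m ≤ (x.2 : ℕ)}

/-- The full block `[n̄] × [m]`. -/
def highLow (m n : ℕ) : Set (Fin (m + n) × Fin (m + n)) :=
  {x | m ≤ (x.1 : ℕ) ∧ (x.2 : ℕ) < m}

/-- The shifted shuffle `R ⧢ S` of two integer relations. -/
def shiftedShuffle {m n : ℕ} (R : Set (Fin m × Fin m)) (S : Set (Fin n × Fin n)) :
    Set (Set (Fin (m + n) × Fin (m + n))) :=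
  {T | ∃ I D : Set (Fin (m + n) × Fin (m + n)),
      I ⊆ lowHigh m n ∧ D ⊆ highLow m n ∧
      T = shiftL R ∪ shiftR S ∪ I ∪ D}

/-- `underprod R S = R ∪ S̄ ∪ ([m] × [n̄])`. -/
def underprod {m n : ℕ} (R : Set (Fin m × Fin m)) (S : Set (Fin n × Fin n)) :
    Set (Fin (m + n) × Fin (m + n)) :=
  shiftL R ∪ shiftR S ∪ lowHigh m n

/-- `overprod R S = R ∪ S̄ ∪ ([n̄] × [m])`. -/
def overprod {m n : ℕ} (R : Set (Fin m × Fin m)) (S : Set (Fin n × Fin n)) :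
    Set (Fin (m + n) × Fin (m + n)) :=
  shiftL R ∪ shiftR S ∪ highLow m n

/-- A total cut `(X, Y)` of a relation `T`. -/
def IsTotalCut {p : ℕ} (T : Set (Fin p × Fin p)) (X Y : Finset (Fin p)) : Prop :=
  (∀ i : Fin p, i ∈ X ∨ i ∈ Y) ∧ Disjoint X Y ∧
    ∀ x ∈ X, ∀ y ∈ Y, (x, y) ∈ T ∧ (y, x) ∉ T

/-- The convolution `R ∗ S` of two integer relations. -/
def convolution {m n : ℕ} (R : Set (Fin m × Fin m)) (S : Set (Fin n × Fin n)) :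
    Set (Set (Fin (m + n) × Fin (m + n))) :=
  {T | ∃ (X Y : Finset (Fin (m + n))) (hX : X.card = m) (hY : Y.card = n),
      IsTotalCut T X Y ∧ restrict T X hX = R ∧ restrict T Y hY = S}

/-- An integer poset: a reflexive, antisymmetric and transitive integer relation. -/
def IsIPos {p : ℕ} (T : Set (Fin p × Fin p)) : Prop :=
  IsIRel T ∧ (∀ a b : Fin p, (a, b) ∈ T → (b, a) ∈ T → a = b) ∧
    ∀ a b c : Fin p, (a, b) ∈ T → (b, c) ∈ T → (a, c) ∈ T

/-- A total order: an integer poset in which any two elements are comparable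
(these are exactly the weak order element posets, `WOEP`). -/
def IsITotal {p : ℕ} (T : Set (Fin p × Fin p)) : Prop :=
  IsIPos T ∧ ∀ a b : Fin p, (a, b) ∈ T ∨ (b, a) ∈ T

/-- `T` admits a primitive cut at `k` (here positions are `0`-indexed, so the
`1`-indexed condition `i ≤ k < j` reads `i < k ≤ j`). -/
def HasPrimitiveCutAt {p : ℕ} (T : Set (Fin p × Fin p)) (k : ℕ) : Prop :=
  ∀ i j : Fin p, (i : ℕ) < k → k ≤ (j : ℕ) → (i, j) ∈ T ∧ (j, i) ∉ T

/-- `T` is under-indecomposable: no non-trivial primitive cut. -/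
def UnderIndecomposable {p : ℕ} (T : Set (Fin p × Fin p)) : Prop :=
  ∀ k : ℕ, 0 < k → k < p → ¬ HasPrimitiveCutAt T k

/-- Membership in `IWOIP`. -/
def InIWOIP {p : ℕ} (T : Set (Fin p × Fin p)) : Prop :=
  IsIPos T ∧ ∀ a b c : Fin p, a < b → b < c → (a, c) ∈ T → (a, b) ∈ T ∨ (b, c) ∈ T

/-- Membership in `DWOIP`. -/
def InDWOIP {p : ℕ} (T : Set (Fin p × Fin p)) : Prop :=
  IsIPos T ∧ ∀ a b c : Fin p, a < b → b < c → (c, a) ∈ T → (b, a) ∈ T ∨ (c, b) ∈ T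

/-- Membership in `WOIP = IWOIP ∩ DWOIP`. -/
def InWOIP {p : ℕ} (T : Set (Fin p × Fin p)) : Prop := InIWOIP T ∧ InDWOIP T

/-- Membership in `WOFP`. -/
def InWOFP {p : ℕ} (T : Set (Fin p × Fin p)) : Prop :=
  InWOIP T ∧ ∀ a b c : Fin p, a < b → b < c → (a, c) ∉ T → (c, a) ∉ T →
    (((a, b) ∈ T ↔ (c, b) ∈ T) ∧ ((b, a) ∈ T ↔ (b, c) ∈ T))

/-- The `IWOIP` increasing deletion. -/
def IWOIPid {p : ℕ} (T : Set (Fin p × Fin p)) : Set (Fin p × Fin p) :=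
  T \ {x | x.1 < x.2 ∧ ∃ l : List (Fin p), l ≠ [] ∧
      List.Chain (fun a b : Fin p => a < b ∧ (a, b) ∉ T) x.1 (l ++ [x.2])}

/-- The `DWOIP` decreasing deletion. -/
def DWOIPdd {p : ℕ} (T : Set (Fin p × Fin p)) : Set (Fin p × Fin p) :=
  T \ {x | x.2 < x.1 ∧ ∃ l : List (Fin p), l ≠ [] ∧
      List.Chain (fun a b : Fin p => a < b ∧ (b, a) ∉ T) x.2 (l ++ [x.1])}

/-- The `WOIP` deletion. -/
def WOIPd {p : ℕ} (T : Set (Fin p × Fin p)) : Set (Fin p × Fin p) :=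
  IWOIPid (DWOIPdd T)

/-- The chain poset `≺_σ` of a permutation: `u ≺_σ v` iff `σ⁻¹ u ≤ σ⁻¹ v`. -/
def chainPoset {p : ℕ} (σ : Equiv.Perm (Fin p)) : Set (Fin p × Fin p) :=
  {x | σ.symm x.1 ≤ σ.symm x.2}

/-- The shifted shuffle of two permutations. -/
def permShiftedShuffle {m n : ℕ} (σ : Equiv.Perm (Fin m)) (τ : Equiv.Perm (Fin n)) :
    Set (Equiv.Perm (Fin (m + n))) :=
  {ρ | (∀ u v : Fin m,
        ρ.symm (Fin.castAdd n u) < ρ.symm (Fin.castAdd n v) ↔ σ.symm u < σ.symm v) ∧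
      ∀ u v : Fin n,
        ρ.symm (Fin.natAdd m u) < ρ.symm (Fin.natAdd m v) ↔ τ.symm u < τ.symm v}

/-- The convolution of two permutations. -/
def permConvolution {m n : ℕ} (σ : Equiv.Perm (Fin m)) (τ : Equiv.Perm (Fin n)) :
    Set (Equiv.Perm (Fin (m + n))) :=
  {ρ | (∀ i j : Fin m, ρ (Fin.castAdd n i) < ρ (Fin.castAdd n j) ↔ σ i < σ j) ∧
      ∀ i j : Fin n, ρ (Fin.natAdd m i) < ρ (Fin.natAdd m j) ↔ τ i < τ j}

/-- Relabelling of a relation along a bijection. -/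
def relabel {p q : ℕ} (e : Fin p ≃ Fin q) (T : Set (Fin p × Fin p)) :
    Set (Fin q × Fin q) :=
  {x | (e.symm x.1, e.symm x.2) ∈ T}

/-- The diagonal `Δ_p`. -/
def diagonal (p : ℕ) : Set (Fin p × Fin p) := {x | x.1 = x.2}


section Helper

variable {m n : ℕ} {P : Set (Fin m × Fin m)} {Q : Set (Fin n × Fin n)}

lemma mem_shiftL2 {a b : Fin (m + n)} :
    (a, b) ∈ shiftL (n := n) P ↔
      ∃ (ha : (a : ℕ) < m) (hb : (b : ℕ) < m),
        ((⟨(a : ℕ), ha⟩ : Fin m), (⟨(b : ℕ), hb⟩ : Fin m)) ∈ P := by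
  constructor
  · rintro ⟨⟨u, v⟩, huv, h⟩
    rw [Prod.ext_iff] at h
    obtain ⟨h1, h2⟩ := h
    have ha : (a : ℕ) = u := congrArg Fin.val h1
    have hb : (b : ℕ) = v := congrArg Fin.val h2
    have hu := u.isLt; have hv := v.isLt
    refine ⟨by omega, by omega, ?_⟩
    convert huv using 2
    · exact Fin.ext ha
    · exact Fin.ext hb
  · rintro ⟨ha, hb, h⟩
    exact ⟨(⟨(a : ℕ), ha⟩, ⟨(b : ℕ), hb⟩), h,
      by rw [Prod.ext_iff]; exact ⟨Fin.ext rfl, Fin.ext rfl⟩⟩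

lemma mem_shiftR2 {a b : Fin (m + n)} :
    (a, b) ∈ shiftR (m := m) Q ↔
      ∃ (_ : m ≤ (a : ℕ)) (_ : m ≤ (b : ℕ)),
        ((⟨(a : ℕ) - m, by have := a.isLt; omega⟩ : Fin n),
         (⟨(b : ℕ) - m, by have := b.isLt; omega⟩ : Fin n)) ∈ Q := by
  constructor
  · rintro ⟨⟨u, v⟩, huv, h⟩
    rw [Prod.ext_iff] at h
    obtain ⟨h1, h2⟩ := h
    have ha : (a : ℕ) = m + u := congrArg Fin.val h1
    have hb : (b : ℕ) = m + v := congrArg Fin.val h2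
    refine ⟨by omega, by omega, ?_⟩
    convert huv using 2
    · exact Fin.ext (by simp; omega)
    · exact Fin.ext (by simp; omega)
  · rintro ⟨ha, hb, h⟩
    refine ⟨(⟨(a : ℕ) - m, by have := a.isLt; omega⟩,
             ⟨(b : ℕ) - m, by have := b.isLt; omega⟩), h, ?_⟩
    rw [Prod.ext_iff]
    constructor
    · exact Fin.ext (by simp; omega)
    · exact Fin.ext (by simp; omega)

lemma mem_underprod' {a b : Fin (m + n)} :
    (a, b) ∈ underprod P Q ↔
      (∃ (ha : (a : ℕ) < m) (hb : (b : ℕ) < m),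
          ((⟨(a : ℕ), ha⟩ : Fin m), (⟨(b : ℕ), hb⟩ : Fin m)) ∈ P) ∨
      (∃ (_ : m ≤ (a : ℕ)) (_ : m ≤ (b : ℕ)),
          ((⟨(a : ℕ) - m, by have := a.isLt; omega⟩ : Fin n),
           (⟨(b : ℕ) - m, by have := b.isLt; omega⟩ : Fin n)) ∈ Q) ∨
      ((a : ℕ) < m ∧ m ≤ (b : ℕ)) := by
  simp only [underprod, Set.mem_union, mem_shiftL2, mem_shiftR2, lowHigh,
    Set.mem_setOf_eq, or_assoc]

lemma mem_overprod' {a b : Fin (m + n)} :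
    (a, b) ∈ overprod P Q ↔
      (∃ (ha : (a : ℕ) < m) (hb : (b : ℕ) < m),
          ((⟨(a : ℕ), ha⟩ : Fin m), (⟨(b : ℕ), hb⟩ : Fin m)) ∈ P) ∨
      (∃ (_ : m ≤ (a : ℕ)) (_ : m ≤ (b : ℕ)),
          ((⟨(a : ℕ) - m, by have := a.isLt; omega⟩ : Fin n),
           (⟨(b : ℕ) - m, by have := b.isLt; omega⟩ : Fin n)) ∈ Q) ∨
      (m ≤ (a : ℕ) ∧ (b : ℕ) < m) := by
  simp only [overprod, Set.mem_union, mem_shiftL2, mem_shiftR2, highLow,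
    Set.mem_setOf_eq, or_assoc]

lemma isIPos_underprod (hP : IsIPos P) (hQ : IsIPos Q) : IsIPos (underprod P Q) := by
  refine ⟨?_, ?_, ?_⟩
  · intro i
    rw [mem_underprod']
    rcases lt_or_ge (i : ℕ) m with h | h
    · exact Or.inl ⟨h, h, hP.1 _⟩
    · exact Or.inr (Or.inl ⟨h, h, hQ.1 _⟩)
  · intro a b hab hba
    rw [mem_underprod'] at hab hba
    rcases hab with ⟨ha, hb, h1⟩ | ⟨ha, hb, h1⟩ | ⟨ha, hb⟩ <;>
      rcases hba with ⟨hb', ha', h2⟩ | ⟨hb', ha', h2⟩ | ⟨hb', ha'⟩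
    · have h3 := hP.2.1 _ _ h1 h2
      have h4 := congrArg Fin.val h3
      exact Fin.ext h4
    · omega
    · omega
    · omega
    · have h3 := hQ.2.1 _ _ h1 h2
      have h4 := congrArg Fin.val h3
      have h5 : (a : ℕ) - m = (b : ℕ) - m := h4
      exact Fin.ext (by omega)
    · omega
    · omega
    · omega
    · omega
  · intro a b c hab hbc
    rw [mem_underprod'] at hab hbc ⊢
    rcases hab with ⟨ha, hb, h1⟩ | ⟨ha, hb, h1⟩ | ⟨ha, hb⟩ <;>
      rcases hbc with ⟨hb', hc, h2⟩ | ⟨hb', hc, h2⟩ | ⟨hb', hc⟩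
    · exact Or.inl ⟨ha, hc, hP.2.2 _ _ _ h1 h2⟩
    · omega
    · exact Or.inr (Or.inr ⟨ha, hc⟩)
    · omega
    · exact Or.inr (Or.inl ⟨ha, hc, hQ.2.2 _ _ _ h1 h2⟩)
    · omega
    · omega
    · exact Or.inr (Or.inr ⟨ha, hc⟩)
    · omega

lemma isIPos_overprod (hP : IsIPos P) (hQ : IsIPos Q) : IsIPos (overprod P Q) := by
  refine ⟨?_, ?_, ?_⟩
  · intro i
    rw [mem_overprod']
    rcases lt_or_ge (i : ℕ) m with h | h
    · exact Or.inl ⟨h, h, hP.1 _⟩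
    · exact Or.inr (Or.inl ⟨h, h, hQ.1 _⟩)
  · intro a b hab hba
    rw [mem_overprod'] at hab hba
    rcases hab with ⟨ha, hb, h1⟩ | ⟨ha, hb, h1⟩ | ⟨ha, hb⟩ <;>
      rcases hba with ⟨hb', ha', h2⟩ | ⟨hb', ha', h2⟩ | ⟨hb', ha'⟩
    · have h3 := hP.2.1 _ _ h1 h2
      have h4 := congrArg Fin.val h3
      exact Fin.ext h4
    · omega
    · omega
    · omega
    · have h3 := hQ.2.1 _ _ h1 h2
      have h4 := congrArg Fin.val h3
      have h5 : (a : ℕ) - m = (b : ℕ) - m := h4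
      exact Fin.ext (by omega)
    · omega
    · omega
    · omega
    · omega
  · intro a b c hab hbc
    rw [mem_overprod'] at hab hbc ⊢
    rcases hab with ⟨ha, hb, h1⟩ | ⟨ha, hb, h1⟩ | ⟨ha, hb⟩ <;>
      rcases hbc with ⟨hb', hc, h2⟩ | ⟨hb', hc, h2⟩ | ⟨hb', hc⟩
    · exact Or.inl ⟨ha, hc, hP.2.2 _ _ _ h1 h2⟩
    · omega
    · omega
    · omega
    · exact Or.inr (Or.inl ⟨ha, hc, hQ.2.2 _ _ _ h1 h2⟩)
    · exact Or.inr (Or.inr ⟨ha, hc⟩)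
    · exact Or.inr (Or.inr ⟨ha, hc⟩)
    · omega
    · exact Or.inr (Or.inr ⟨ha, hc⟩)

lemma mem_inc {p : ℕ} {R : Set (Fin p × Fin p)} {a b : Fin p} :
    (a, b) ∈ inc R ↔ (a, b) ∈ R ∧ (a : ℕ) < (b : ℕ) := Iff.rfl

lemma mem_dec {p : ℕ} {R : Set (Fin p × Fin p)} {a b : Fin p} :
    (a, b) ∈ dec R ↔ (a, b) ∈ R ∧ (b : ℕ) < (a : ℕ) := Iff.rfl

lemma mem_shuffle_iff {T : Set (Fin (m + n) × Fin (m + n))} :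
    T ∈ shiftedShuffle P Q ↔
      (∀ a b : Fin (m + n), (a : ℕ) < m → (b : ℕ) < m →
          ((a, b) ∈ T ↔ (a, b) ∈ shiftL (n := n) P)) ∧
      (∀ a b : Fin (m + n), m ≤ (a : ℕ) → m ≤ (b : ℕ) →
          ((a, b) ∈ T ↔ (a, b) ∈ shiftR (m := m) Q)) := by
  constructor
  · rintro ⟨I, D, hI, hD, rfl⟩
    constructor
    · intro a b ha hb
      constructor
      · rintro (((h | h) | h) | h)
        · exact h
        · obtain ⟨h1, h2, -⟩ := mem_shiftR2.1 h; omega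
        · have h' := hI h
          simp only [lowHigh, Set.mem_setOf_eq] at h'
          omega
        · have h' := hD h
          simp only [highLow, Set.mem_setOf_eq] at h'
          omega
      · intro h; exact Or.inl (Or.inl (Or.inl h))
    · intro a b ha hb
      constructor
      · rintro (((h | h) | h) | h)
        · obtain ⟨h1, h2, -⟩ := mem_shiftL2.1 h; omega
        · exact h
        · have h' := hI h
          simp only [lowHigh, Set.mem_setOf_eq] at h'
          omega
        · have h' := hD h
          simp only [highLow, Set.mem_setOf_eq] at h'
          omega
      · intro h; exact Or.inl (Or.inl (Or.inr h))
  · rintro ⟨hL, hH⟩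
    refine ⟨T ∩ lowHigh m n, T ∩ highLow m n, Set.inter_subset_right,
      Set.inter_subset_right, ?_⟩
    ext ⟨a, b⟩
    constructor
    · intro h
      rcases lt_or_ge (a : ℕ) m with ha | ha <;> rcases lt_or_ge (b : ℕ) m with hb | hb
      · exact Or.inl (Or.inl (Or.inl ((hL a b ha hb).1 h)))
      · exact Or.inl (Or.inr ⟨h, ha, hb⟩)
      · exact Or.inr ⟨h, ha, hb⟩
      · exact Or.inl (Or.inl (Or.inr ((hH a b ha hb).1 h)))
    · rintro (((h | h) | h) | h)
      · have h' := h
        rw [mem_shiftL2] at h'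
        obtain ⟨ha, hb, -⟩ := h'
        exact (hL a b ha hb).2 h
      · have h' := h
        rw [mem_shiftR2] at h'
        obtain ⟨ha, hb, -⟩ := h'
        exact (hH a b ha hb).2 h
      · exact h.1
      · exact h.1

lemma sandwich_iff {T : Set (Fin (m + n) × Fin (m + n))} (hT : IsIRel T)
    (hP : IsIRel P) (hQ : IsIRel Q) :
    (WOle (underprod P Q) T ∧ WOle T (overprod P Q)) ↔
      (∀ a b : Fin (m + n), (a : ℕ) < m → (b : ℕ) < m →
          ((a, b) ∈ T ↔ (a, b) ∈ shiftL (n := n) P)) ∧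
      (∀ a b : Fin (m + n), m ≤ (a : ℕ) → m ≤ (b : ℕ) →
          ((a, b) ∈ T ↔ (a, b) ∈ shiftR (m := m) Q)) := by
  constructor
  · rintro ⟨⟨hu1, hu2⟩, ⟨ho1, ho2⟩⟩
    constructor
    · intro a b ha hb
      rcases Nat.lt_trichotomy (a : ℕ) (b : ℕ) with hlt | heq | hgt
      · constructor
        · intro h
          have h2 := hu1 (mem_inc.2 ⟨h, hlt⟩)
          have h3 := (mem_inc.1 h2).1
          rw [mem_underprod'] at h3
          rcases h3 with ⟨ha', hb', h3⟩ | ⟨ha', hb', h3⟩ | ⟨ha', hb'⟩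
          · exact mem_shiftL2.2 ⟨ha', hb', h3⟩
          · omega
          · omega
        · intro h
          have h1 : (a, b) ∈ overprod P Q := Or.inl (Or.inl h)
          exact (mem_inc.1 (ho1 (mem_inc.2 ⟨h1, hlt⟩))).1
      · have hab : a = b := Fin.ext heq
        subst hab
        exact ⟨fun _ => mem_shiftL2.2 ⟨ha, ha, hP _⟩, fun _ => hT a⟩
      · constructor
        · intro h
          have h2 := ho2 (mem_dec.2 ⟨h, hgt⟩)
          have h3 := (mem_dec.1 h2).1
          rw [mem_overprod'] at h3
          rcases h3 with ⟨ha', hb', h3⟩ | ⟨ha', hb', h3⟩ | ⟨ha', hb'⟩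
          · exact mem_shiftL2.2 ⟨ha', hb', h3⟩
          · omega
          · omega
        · intro h
          have h1 : (a, b) ∈ underprod P Q := Or.inl (Or.inl h)
          exact (mem_dec.1 (hu2 (mem_dec.2 ⟨h1, hgt⟩))).1
    · intro a b ha hb
      rcases Nat.lt_trichotomy (a : ℕ) (b : ℕ) with hlt | heq | hgt
      · constructor
        · intro h
          have h2 := hu1 (mem_inc.2 ⟨h, hlt⟩)
          have h3 := (mem_inc.1 h2).1
          rw [mem_underprod'] at h3
          rcases h3 with ⟨ha', hb', h3⟩ | ⟨ha', hb', h3⟩ | ⟨ha', hb'⟩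
          · omega
          · exact mem_shiftR2.2 ⟨ha', hb', h3⟩
          · omega
        · intro h
          have h1 : (a, b) ∈ overprod P Q := Or.inl (Or.inr h)
          exact (mem_inc.1 (ho1 (mem_inc.2 ⟨h1, hlt⟩))).1
      · have hab : a = b := Fin.ext heq
        subst hab
        exact ⟨fun _ => mem_shiftR2.2 ⟨ha, ha, hQ _⟩, fun _ => hT a⟩
      · constructor
        · intro h
          have h2 := ho2 (mem_dec.2 ⟨h, hgt⟩)
          have h3 := (mem_dec.1 h2).1
          rw [mem_overprod'] at h3
          rcases h3 with ⟨ha', hb', h3⟩ | ⟨ha', hb', h3⟩ | ⟨ha', hb'⟩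
          · omega
          · exact mem_shiftR2.2 ⟨ha', hb', h3⟩
          · omega
        · intro h
          have h1 : (a, b) ∈ underprod P Q := Or.inl (Or.inr h)
          exact (mem_dec.1 (hu2 (mem_dec.2 ⟨h1, hgt⟩))).1
  · rintro ⟨hL, hH⟩
    refine ⟨⟨?_, ?_⟩, ?_, ?_⟩
    · rintro ⟨a, b⟩ hx
      obtain ⟨h, hlt⟩ := mem_inc.1 hx
      refine mem_inc.2 ⟨?_, hlt⟩
      rw [mem_underprod']
      rcases lt_or_ge (a : ℕ) m with ha | ha <;> rcases lt_or_ge (b : ℕ) m with hb | hb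
      · have h2 := (hL a b ha hb).1 h
        rw [mem_shiftL2] at h2
        exact Or.inl h2
      · exact Or.inr (Or.inr ⟨ha, hb⟩)
      · omega
      · have h2 := (hH a b ha hb).1 h
        rw [mem_shiftR2] at h2
        exact Or.inr (Or.inl h2)
    · rintro ⟨a, b⟩ hx
      obtain ⟨h, hgt⟩ := mem_dec.1 hx
      refine mem_dec.2 ⟨?_, hgt⟩
      rw [mem_underprod'] at h
      rcases h with ⟨ha, hb, h1⟩ | ⟨ha, hb, h1⟩ | ⟨ha, hb⟩
      · exact (hL a b ha hb).2 (mem_shiftL2.2 ⟨ha, hb, h1⟩)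
      · exact (hH a b ha hb).2 (mem_shiftR2.2 ⟨ha, hb, h1⟩)
      · omega
    · rintro ⟨a, b⟩ hx
      obtain ⟨h, hlt⟩ := mem_inc.1 hx
      refine mem_inc.2 ⟨?_, hlt⟩
      rw [mem_overprod'] at h
      rcases h with ⟨ha, hb, h1⟩ | ⟨ha, hb, h1⟩ | ⟨ha, hb⟩
      · exact (hL a b ha hb).2 (mem_shiftL2.2 ⟨ha, hb, h1⟩)
      · exact (hH a b ha hb).2 (mem_shiftR2.2 ⟨ha, hb, h1⟩)
      · omega
    · rintro ⟨a, b⟩ hx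
      obtain ⟨h, hgt⟩ := mem_dec.1 hx
      refine mem_dec.2 ⟨?_, hgt⟩
      rw [mem_overprod']
      rcases lt_or_ge (a : ℕ) m with ha | ha <;> rcases lt_or_ge (b : ℕ) m with hb | hb
      · have h2 := (hL a b ha hb).1 h
        rw [mem_shiftL2] at h2
        exact Or.inl h2
      · omega
      · exact Or.inr (Or.inr ⟨ha, hb⟩)
      · have h2 := (hH a b ha hb).1 h
        rw [mem_shiftR2] at h2
        exact Or.inr (Or.inl h2)

end Helper

/-- the product of two integer posets is a weak order interval
of integer posets. -/
theorem poset_product_interval (m n : ℕ)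
    (P : Set (Fin m × Fin m)) (Q : Set (Fin n × Fin n))
    (hP : IsIPos P) (hQ : IsIPos Q) :
    IsIPos (underprod P Q) ∧ IsIPos (overprod P Q) ∧
    {T | T ∈ shiftedShuffle P Q ∧ IsIPos T}
      = {T : Set (Fin (m + n) × Fin (m + n)) | IsIPos T ∧
          WOle (underprod P Q) T ∧ WOle T (overprod P Q)} := by
  refine ⟨isIPos_underprod hP hQ, isIPos_overprod hP hQ, ?_⟩
  ext T
  simp only [Set.mem_setOf_eq]
  constructor
  · rintro ⟨hsh, hpos⟩
    exact ⟨hpos, (sandwich_iff hpos.1 hP.1 hQ.1).2 (mem_shuffle_iff.1 hsh)⟩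
  · rintro ⟨hpos, hw⟩
    exact ⟨mem_shuffle_iff.2 ((sandwich_iff hpos.1 hP.1 hQ.1).1 hw), hpos⟩

end IntegerRelations
end

section
/- Let ≺ ∈ IPos_m and ⋖ ∈ IPos_n be integer posets. (i) If the shifted shuffle ≺ ⧢ ⋖ contains at least one total order, then ≺ and ⋖ are both total orders. (ii) If ≺ and ⋖ are both total orders, then every element of the convolution ≺ ∗ ⋖ is a total order. (iii) If the convolution ≺ ∗ ⋖ contains at least one total order, then ≺ and ⋖ are both total orders. -/
namespace IntegerRelations

private lemma mem_restrict_iff {p k : ℕ} (T : Set (Fin p × Fin p)) (X : Finset (Fin p))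
    (h : X.card = k) (i j : Fin p) (hi : i ∈ X) (hj : j ∈ X) :
    (i, j) ∈ T ↔
      ((X.orderIsoOfFin h).symm ⟨i, hi⟩, (X.orderIsoOfFin h).symm ⟨j, hj⟩) ∈ restrict T X h := by
  simp only [restrict, Set.mem_setOf_eq, OrderIso.apply_symm_apply]

/-- total orders and the shifted shuffle / convolution. -/
theorem totalOrders_shuffle_convolution (m n : ℕ)
    (P : Set (Fin m × Fin m)) (Q : Set (Fin n × Fin n))
    (hP : IsIPos P) (hQ : IsIPos Q) :
    ((∃ T ∈ shiftedShuffle P Q, IsITotal T) → IsITotal P ∧ IsITotal Q) ∧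
    ((IsITotal P ∧ IsITotal Q) → ∀ T ∈ convolution P Q, IsITotal T) ∧
    ((∃ T ∈ convolution P Q, IsITotal T) → IsITotal P ∧ IsITotal Q) := by
  refine ⟨?_, ?_, ?_⟩
  · -- (i) shifted shuffle
    rintro ⟨T, ⟨I, D, hI, hD, rfl⟩, hTpos, hTtot⟩
    have lowmem : ∀ a b : Fin m,
        (Fin.castAdd n a, Fin.castAdd n b) ∈ shiftL P ∪ shiftR Q ∪ I ∪ D → (a, b) ∈ P := by
      intro a b h
      rcases h with ((h | h) | h) | h
      · obtain ⟨y, hy, he⟩ := h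
        rw [Prod.ext_iff] at he
        have h1 : a = y.1 := Fin.ext (by simpa using congrArg Fin.val he.1)
        have h2 : b = y.2 := Fin.ext (by simpa using congrArg Fin.val he.2)
        rw [h1, h2]; exact hy
      · obtain ⟨y, hy, he⟩ := h
        rw [Prod.ext_iff] at he
        have h1 : (a : ℕ) = m + y.1 := by simpa using congrArg Fin.val he.1
        have := a.isLt; omega
      · have := (hI h).2
        simp only [Fin.coe_castAdd] at this
        exact absurd this (by exact Nat.not_le.mpr b.isLt)
      · have := (hD h).1
        simp only [Fin.coe_castAdd] at this
        exact absurd this (by exact Nat.not_le.mpr a.isLt)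
    have highmem : ∀ a b : Fin n,
        (Fin.natAdd m a, Fin.natAdd m b) ∈ shiftL P ∪ shiftR Q ∪ I ∪ D → (a, b) ∈ Q := by
      intro a b h
      rcases h with ((h | h) | h) | h
      · obtain ⟨y, hy, he⟩ := h
        rw [Prod.ext_iff] at he
        have h1 : m + (a : ℕ) = (y.1 : ℕ) := by simpa using congrArg Fin.val he.1
        have := y.1.isLt; omega
      · obtain ⟨y, hy, he⟩ := h
        rw [Prod.ext_iff] at he
        have h1 : a = y.1 := Fin.ext (by
          have := congrArg Fin.val he.1; simp only [Fin.coe_natAdd] at this; omega)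
        have h2 : b = y.2 := Fin.ext (by
          have := congrArg Fin.val he.2; simp only [Fin.coe_natAdd] at this; omega)
        rw [h1, h2]; exact hy
      · have := (hI h).1
        simp only [Fin.coe_natAdd] at this; omega
      · have := (hD h).2
        simp only [Fin.coe_natAdd] at this; omega
    exact ⟨⟨hP, fun a b => (hTtot _ _).imp (lowmem a b) (lowmem b a)⟩,
      ⟨hQ, fun a b => (hTtot _ _).imp (highmem a b) (highmem b a)⟩⟩
  · -- (ii) convolution of total orders
    rintro ⟨⟨⟨hPr, hPa, hPt⟩, hPtot⟩, ⟨hQr, hQa, hQt⟩, hQtot⟩ T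
      ⟨X, Y, hX, hY, ⟨hcov, hdisj, hcut⟩, hPX, hQY⟩
    have hXmem : ∀ i j (hi : i ∈ X) (hj : j ∈ X), (i, j) ∈ T ↔
        ((X.orderIsoOfFin hX).symm ⟨i, hi⟩, (X.orderIsoOfFin hX).symm ⟨j, hj⟩) ∈ P := by
      intro i j hi hj
      rw [mem_restrict_iff T X hX i j hi hj, hPX]
    have hYmem : ∀ i j (hi : i ∈ Y) (hj : j ∈ Y), (i, j) ∈ T ↔
        ((Y.orderIsoOfFin hY).symm ⟨i, hi⟩, (Y.orderIsoOfFin hY).symm ⟨j, hj⟩) ∈ Q := by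
      intro i j hi hj
      rw [mem_restrict_iff T Y hY i j hi hj, hQY]
    have notYX : ∀ i ∈ X, ∀ j ∈ Y, (j, i) ∉ T := fun i hi j hj => (hcut i hi j hj).2
    have inXY : ∀ i ∈ X, ∀ j ∈ Y, (i, j) ∈ T := fun i hi j hj => (hcut i hi j hj).1
    have hdX : ∀ i, i ∈ X → i ∉ Y := fun i hi => Finset.disjoint_left.mp hdisj hi
    refine ⟨⟨?_, ?_, ?_⟩, ?_⟩
    · intro i
      rcases hcov i with hi | hi
      · exact (hXmem i i hi hi).mpr (hPr _)
      · exact (hYmem i i hi hi).mpr (hQr _)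
    · intro a b hab hba
      rcases hcov a with ha | ha <;> rcases hcov b with hb | hb
      · have := hPa _ _ ((hXmem a b ha hb).mp hab) ((hXmem b a hb ha).mp hba)
        have := (X.orderIsoOfFin hX).symm.injective this
        exact congrArg Subtype.val this
      · exact absurd hba (notYX a ha b hb)
      · exact absurd hab (notYX b hb a ha)
      · have := hQa _ _ ((hYmem a b ha hb).mp hab) ((hYmem b a hb ha).mp hba)
        have := (Y.orderIsoOfFin hY).symm.injective this
        exact congrArg Subtype.val this
    · intro a b c hab hbc
      rcases hcov a with ha | ha <;> rcases hcov c with hc | hc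
      · rcases hcov b with hb | hb
        · exact (hXmem a c ha hc).mpr
            (hPt _ _ _ ((hXmem a b ha hb).mp hab) ((hXmem b c hb hc).mp hbc))
        · exact absurd hbc (notYX c hc b hb)
      · exact inXY a ha c hc
      · rcases hcov b with hb | hb
        · exact absurd hab (notYX b hb a ha)
        · exact absurd hbc (notYX c hc b hb)
      · rcases hcov b with hb | hb
        · exact absurd hab (notYX b hb a ha)
        · exact (hYmem a c ha hc).mpr
            (hQt _ _ _ ((hYmem a b ha hb).mp hab) ((hYmem b c hb hc).mp hbc))
    · intro a b
      rcases hcov a with ha | ha <;> rcases hcov b with hb | hb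
      · exact (hPtot _ _).imp ((hXmem a b ha hb).mpr) ((hXmem b a hb ha).mpr)
      · exact Or.inl (inXY a ha b hb)
      · exact Or.inr (inXY b hb a ha)
      · exact (hQtot _ _).imp ((hYmem a b ha hb).mpr) ((hYmem b a hb ha).mpr)
  · -- (iii) total order in convolution
    rintro ⟨T, ⟨X, Y, hX, hY, ⟨hcov, hdisj, hcut⟩, hPX, hQY⟩, hTpos, hTtot⟩
    refine ⟨⟨hP, fun a b => ?_⟩, hQ, fun a b => ?_⟩
    · rcases hTtot (X.orderIsoOfFin hX a) (X.orderIsoOfFin hX b) with h | h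
      · exact Or.inl (by rw [← hPX]; exact h)
      · exact Or.inr (by rw [← hPX]; exact h)
    · rcases hTtot (Y.orderIsoOfFin hY a) (Y.orderIsoOfFin hY b) with h | h
      · exact Or.inl (by rw [← hQY]; exact h)
      · exact Or.inr (by rw [← hQY]; exact h)

end IntegerRelations
end

section
/- Let σ be a permutation of [m] and τ a permutation of [n]. Then (≺_σ ⧢ ≺_τ) ∩ WOEP_{m+n} = {≺_ρ : ρ ∈ σ ⧢ τ}, where σ ⧢ τ denotes the shifted shuffle of permutations. -/
namespace IntegerRelations

/-!
A total integer poset `T` on `[p]` is the chain poset of the permutation listing `[p]` in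
`T`-increasing order. Membership of `T` in a shifted shuffle `R ⧢ S` only constrains the two
diagonal blocks: the restrictions of `T` to `[m]` and to `[n̄]` must be `R` and `S`. For
`T = ≺_ρ` these restrictions are `≺_σ` and `≺_τ` exactly when `ρ` orders each block as `σ`,
resp. `τ`, does, i.e. when `ρ ∈ σ ⧢ τ`.
-/

theorem mem_chainPoset {p : ℕ} {σ : Equiv.Perm (Fin p)} {x : Fin p × Fin p} :
    x ∈ chainPoset σ ↔ σ.symm x.1 ≤ σ.symm x.2 :=
  Iff.rfl

theorem isITotal_chainPoset {p : ℕ} (σ : Equiv.Perm (Fin p)) : IsITotal (chainPoset σ) :=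
  ⟨⟨fun _ => mem_chainPoset.2 le_rfl,
      fun _ _ hab hba => σ.symm.injective (le_antisymm hab hba),
      fun _ _ _ hab hbc => mem_chainPoset.2 (le_trans hab hbc)⟩,
    fun a b => le_total (σ.symm a) (σ.symm b)⟩

theorem _root_.List.Pairwise.rel_get_iff_le {α : Type*} {r : α → α → Prop} {l : List α}
    (hl : l.Pairwise r) (hnd : l.Nodup) (hrefl : ∀ a, r a a)
    (hanti : ∀ a b, r a b → r b a → a = b) {i j : Fin l.length} :
    r (l.get i) (l.get j) ↔ i ≤ j := by
  refine ⟨fun hij => not_lt.1 fun hji => ?_, fun hij => ?_⟩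
  · exact hji.ne (hnd.get_inj_iff.1 (hanti _ _ (hl.rel_get_of_lt hji) hij))
  · rcases hij.eq_or_lt with rfl | hlt
    exacts [hrefl _, hl.rel_get_of_lt hlt]

-- `ρ` lists `[p]` in `T`-increasing order.
theorem exists_chainPoset_eq_of_isITotal {p : ℕ} {T : Set (Fin p × Fin p)} (hT : IsITotal T) :
    ∃ ρ : Equiv.Perm (Fin p), chainPoset ρ = T := by
  classical
  obtain ⟨⟨hrefl, hanti, htrans⟩, htot⟩ := hT
  let r : Fin p → Fin p → Prop := fun a b => (a, b) ∈ T
  have : IsTrans (Fin p) r := ⟨htrans⟩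
  have : Std.Antisymm r := ⟨hanti⟩
  have : Std.Total r := ⟨htot⟩
  let l := Finset.univ.sort r
  have hlen : l.length = p := by simp [l]
  let e := (Finset.sort_nodup _ r).getEquivOfForallMemList l (by simp [l])
  refine ⟨(finCongr hlen.symm).trans e, Set.ext fun ⟨a, b⟩ => ?_⟩
  have key : r (e (e.symm a)) (e (e.symm b)) ↔ e.symm a ≤ e.symm b :=
    (Finset.pairwise_sort _ r).rel_get_iff_le (Finset.sort_nodup _ r) hrefl hanti
  rw [e.apply_symm_apply, e.apply_symm_apply] at key
  simpa only [mem_chainPoset, Equiv.symm_trans, finCongr_symm, Equiv.trans_apply, finCongr_apply,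
    Fin.cast_le_cast] using key.symm

@[simp]
theorem castAdd_ne_natAdd {m n : ℕ} (u : Fin m) (v : Fin n) :
    Fin.castAdd n u ≠ Fin.natAdd m v :=
  Fin.ne_of_lt (by simp only [Fin.lt_def, Fin.val_castAdd, Fin.val_natAdd]; omega)

@[simp]
theorem natAdd_ne_castAdd {m n : ℕ} (u : Fin n) (v : Fin m) :
    Fin.natAdd m u ≠ Fin.castAdd n v :=
  (castAdd_ne_natAdd v u).symm

theorem mem_shiftedShuffle_iff {m n : ℕ} {R : Set (Fin m × Fin m)} {S : Set (Fin n × Fin n)}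
    {T : Set (Fin (m + n) × Fin (m + n))} :
    T ∈ shiftedShuffle R S ↔
      (∀ u v, (Fin.castAdd n u, Fin.castAdd n v) ∈ T ↔ (u, v) ∈ R) ∧
        ∀ u v, (Fin.natAdd m u, Fin.natAdd m v) ∈ T ↔ (u, v) ∈ S := by
  constructor
  · rintro ⟨I, D, hI, hD, rfl⟩
    have hcast : ∀ u v, (Fin.castAdd n u, Fin.castAdd n v) ∉ I ∪ D := by
      rintro u v (h | h)
      · exact (hI h).2.not_gt v.is_lt
      · exact (hD h).1.not_gt u.is_lt
    have hnat : ∀ u v, (Fin.natAdd m u, Fin.natAdd m v) ∉ I ∪ D := by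
      rintro u v (h | h)
      · simpa using (hI h).1
      · simpa using (hD h).2
    simp only [Set.union_assoc, Set.mem_union] at hcast hnat ⊢
    refine ⟨fun u v => ?_, fun u v => ?_⟩
    · simp [shiftL, shiftR, hcast]
    · simp [shiftL, shiftR, hnat]
  · rintro ⟨hR, hS⟩
    refine ⟨T ∩ lowHigh m n, T ∩ highLow m n, Set.inter_subset_right,
      Set.inter_subset_right, Set.ext fun ⟨a, b⟩ => ?_⟩
    induction a using Fin.addCases <;> induction b using Fin.addCases <;>
      simp [shiftL, shiftR, lowHigh, highLow, hR, hS, fun i : Fin m => i.is_lt.not_ge]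

/-- the shifted shuffle of chain posets. -/
theorem chainPoset_shiftedShuffle (m n : ℕ)
    (σ : Equiv.Perm (Fin m)) (τ : Equiv.Perm (Fin n)) :
    {T | T ∈ shiftedShuffle (chainPoset σ) (chainPoset τ) ∧ IsITotal T}
      = {T : Set (Fin (m + n) × Fin (m + n)) |
          ∃ ρ : Equiv.Perm (Fin (m + n)),
            ρ ∈ permShiftedShuffle σ τ ∧ T = chainPoset ρ} := by
  ext T
  simp only [Set.mem_ofPred_eq, mem_shiftedShuffle_iff, permShiftedShuffle, mem_chainPoset]
  constructor
  · rintro ⟨⟨hσ, hτ⟩, hT⟩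
    obtain ⟨ρ, rfl⟩ := exists_chainPoset_eq_of_isITotal hT
    exact ⟨ρ, ⟨fun u v => le_iff_le_iff_lt_iff_lt.1 (hσ v u),
      fun u v => le_iff_le_iff_lt_iff_lt.1 (hτ v u)⟩, rfl⟩
  · rintro ⟨ρ, ⟨hσ, hτ⟩, rfl⟩
    exact ⟨⟨fun u v => le_iff_le_iff_lt_iff_lt.2 (hσ v u),
      fun u v => le_iff_le_iff_lt_iff_lt.2 (hτ v u)⟩, isITotal_chainPoset ρ⟩

end IntegerRelations
end

section
/- Let σ be a permutation of [m] and τ a permutation of [n]. Then ≺_σ ∗ ≺_τ = {≺_ρ : ρ ∈ σ ∗ τ}, where on the left ∗ denotes the convolution of integer relations and on the right σ ∗ τ denotes the convolution of permutations. -/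
namespace IntegerRelations

/-- the convolution of chain posets. -/
theorem chainPoset_convolution (m n : ℕ)
    (σ : Equiv.Perm (Fin m)) (τ : Equiv.Perm (Fin n)) :
    convolution (chainPoset σ) (chainPoset τ)
      = {T : Set (Fin (m + n) × Fin (m + n)) |
          ∃ ρ : Equiv.Perm (Fin (m + n)),
            ρ ∈ permConvolution σ τ ∧ T = chainPoset ρ} := by
  ext T
  constructor
  · rintro ⟨X, Y, hX, hY, ⟨hcov, hdisj, hcut⟩, hRX, hRY⟩
    classical
    have hknm : ∀ k : Fin (m + n), ¬ (k : ℕ) < m → (k : ℕ) - m < n := by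
      intro k h
      have := k.isLt
      omega
    set f : Fin (m + n) → Fin (m + n) := fun k =>
      if h : (k : ℕ) < m then X.orderEmbOfFin hX (σ ⟨k, h⟩)
      else Y.orderEmbOfFin hY (τ ⟨(k : ℕ) - m, hknm k h⟩) with hfdef
    have hfi : Function.Injective f := by
      intro a b hab
      by_cases ha : (a : ℕ) < m <;> by_cases hb : (b : ℕ) < m
      · simp only [hfdef, dif_pos ha, dif_pos hb] at hab
        have h1 := σ.injective ((X.orderEmbOfFin hX).injective hab)
        exact Fin.ext (by simpa using congrArg Fin.val h1)
      · exfalso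
        have h1 : f a ∈ X := by
          simp only [hfdef, dif_pos ha]; exact X.orderEmbOfFin_mem hX _
        have h2 : f b ∈ Y := by
          simp only [hfdef, dif_neg hb]; exact Y.orderEmbOfFin_mem hY _
        exact Finset.disjoint_left.mp hdisj (hab ▸ h1) h2
      · exfalso
        have h1 : f a ∈ Y := by
          simp only [hfdef, dif_neg ha]; exact Y.orderEmbOfFin_mem hY _
        have h2 : f b ∈ X := by
          simp only [hfdef, dif_pos hb]; exact X.orderEmbOfFin_mem hX _
        exact Finset.disjoint_left.mp hdisj h2 (hab ▸ h1)
      · simp only [hfdef, dif_neg ha, dif_neg hb] at hab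
        have h1 := τ.injective ((Y.orderEmbOfFin hY).injective hab)
        have h2 : (a : ℕ) - m = (b : ℕ) - m := by simpa using congrArg Fin.val h1
        exact Fin.ext (by omega)
    let ρ : Equiv.Perm (Fin (m + n)) := Equiv.ofBijective f (Finite.injective_iff_bijective.mp hfi)
    have hρc : ∀ i : Fin m, ρ (Fin.castAdd n i) = X.orderEmbOfFin hX (σ i) := by
      intro i
      have h : ((Fin.castAdd n i : Fin (m + n)) : ℕ) < m := i.isLt
      show f _ = _
      rw [hfdef]
      simp only [dif_pos h]
      congr 1
    have hρn : ∀ i : Fin n, ρ (Fin.natAdd m i) = Y.orderEmbOfFin hY (τ i) := by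
      intro i
      have h : ¬ ((Fin.natAdd m i : Fin (m + n)) : ℕ) < m := by simp
      show f _ = _
      rw [hfdef]
      simp only [dif_neg h]
      congr 1
      exact congrArg τ (Fin.ext (by simp))
    have hsymmX : ∀ (a : Fin (m + n)) (ha : a ∈ X),
        ρ.symm a = Fin.castAdd n (σ.symm ((X.orderIsoOfFin hX).symm ⟨a, ha⟩)) := by
      intro a ha
      rw [Equiv.symm_apply_eq, hρc, Equiv.apply_symm_apply,
        ← Finset.coe_orderIsoOfFin_apply, OrderIso.apply_symm_apply]
    have hsymmY : ∀ (a : Fin (m + n)) (ha : a ∈ Y),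
        ρ.symm a = Fin.natAdd m (τ.symm ((Y.orderIsoOfFin hY).symm ⟨a, ha⟩)) := by
      intro a ha
      rw [Equiv.symm_apply_eq, hρn, Equiv.apply_symm_apply,
        ← Finset.coe_orderIsoOfFin_apply, OrderIso.apply_symm_apply]
    have hTX : ∀ u v : Fin m,
        ((X.orderEmbOfFin hX u, X.orderEmbOfFin hX v) ∈ T) ↔ σ.symm u ≤ σ.symm v := by
      intro u v
      have h : ((u, v) ∈ restrict T X hX) ↔ ((u, v) ∈ chainPoset σ) := by rw [hRX]
      simpa [restrict, chainPoset, Finset.coe_orderIsoOfFin_apply] using h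
    have hTY : ∀ u v : Fin n,
        ((Y.orderEmbOfFin hY u, Y.orderEmbOfFin hY v) ∈ T) ↔ τ.symm u ≤ τ.symm v := by
      intro u v
      have h : ((u, v) ∈ restrict T Y hY) ↔ ((u, v) ∈ chainPoset τ) := by rw [hRY]
      simpa [restrict, chainPoset, Finset.coe_orderIsoOfFin_apply] using h
    refine ⟨ρ, ⟨?_, ?_⟩, ?_⟩
    · intro i j
      rw [hρc, hρc]
      exact (X.orderEmbOfFin hX).lt_iff_lt
    · intro i j
      rw [hρn, hρn]
      exact (Y.orderEmbOfFin hY).lt_iff_lt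
    · ext ⟨a, b⟩
      show (a, b) ∈ T ↔ ρ.symm a ≤ ρ.symm b
      rcases hcov a with ha | ha <;> rcases hcov b with hb | hb
      · have hau : a = X.orderEmbOfFin hX ((X.orderIsoOfFin hX).symm ⟨a, ha⟩) := by
          rw [← Finset.coe_orderIsoOfFin_apply, OrderIso.apply_symm_apply]
        have hbv : b = X.orderEmbOfFin hX ((X.orderIsoOfFin hX).symm ⟨b, hb⟩) := by
          rw [← Finset.coe_orderIsoOfFin_apply, OrderIso.apply_symm_apply]
        rw [hsymmX a ha, hsymmX b hb]
        conv_lhs => rw [hau, hbv]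
        rw [hTX]
        simp only [Fin.le_def, Fin.coe_castAdd]
      · rw [hsymmX a ha, hsymmY b hb]
        refine ⟨fun _ => ?_, fun _ => (hcut a ha b hb).1⟩
        have hlt := (σ.symm ((X.orderIsoOfFin hX).symm ⟨a, ha⟩)).isLt
        simp only [Fin.le_def, Fin.coe_castAdd, Fin.coe_natAdd]
        omega
      · rw [hsymmY a ha, hsymmX b hb]
        refine ⟨fun h => absurd h (hcut b hb a ha).2, fun h => ?_⟩
        exfalso
        have hlt := (σ.symm ((X.orderIsoOfFin hX).symm ⟨b, hb⟩)).isLt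
        simp only [Fin.le_def, Fin.coe_castAdd, Fin.coe_natAdd] at h
        omega
      · have hau : a = Y.orderEmbOfFin hY ((Y.orderIsoOfFin hY).symm ⟨a, ha⟩) := by
          rw [← Finset.coe_orderIsoOfFin_apply, OrderIso.apply_symm_apply]
        have hbv : b = Y.orderEmbOfFin hY ((Y.orderIsoOfFin hY).symm ⟨b, hb⟩) := by
          rw [← Finset.coe_orderIsoOfFin_apply, OrderIso.apply_symm_apply]
        rw [hsymmY a ha, hsymmY b hb]
        conv_lhs => rw [hau, hbv]
        rw [hTY]
        simp only [Fin.le_def, Fin.coe_natAdd]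
        omega
  · rintro ⟨ρ, ⟨h1, h2⟩, rfl⟩
    classical
    have hci : Function.Injective fun i : Fin m => ρ (Fin.castAdd n i) := by
      intro a b h
      have := congrArg Fin.val (ρ.injective h)
      exact Fin.ext (by simpa using this)
    have hni : Function.Injective fun i : Fin n => ρ (Fin.natAdd m i) := by
      intro a b h
      have := congrArg Fin.val (ρ.injective h)
      exact Fin.ext (by simpa using this)
    refine ⟨Finset.image (fun i => ρ (Fin.castAdd n i)) Finset.univ,
      Finset.image (fun i => ρ (Fin.natAdd m i)) Finset.univ,
      (Finset.card_image_of_injective _ hci).trans (by simp),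
      (Finset.card_image_of_injective _ hni).trans (by simp), ⟨?_, ?_, ?_⟩, ?_, ?_⟩
    · intro a
      by_cases h : ((ρ.symm a : Fin (m + n)) : ℕ) < m
      · left
        refine Finset.mem_image.mpr ⟨⟨(ρ.symm a : ℕ), h⟩, Finset.mem_univ _, ?_⟩
        have he : Fin.castAdd n ⟨((ρ.symm a : Fin (m+n)) : ℕ), h⟩ = ρ.symm a := Fin.ext rfl
        rw [he, Equiv.apply_symm_apply]
      · right
        have hlt := (ρ.symm a).isLt
        refine Finset.mem_image.mpr ⟨⟨(ρ.symm a : ℕ) - m, by omega⟩, Finset.mem_univ _, ?_⟩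
        have he : Fin.natAdd m (⟨(ρ.symm a : ℕ) - m, by omega⟩ : Fin n) = ρ.symm a :=
          Fin.ext (by simp; omega)
        rw [he, Equiv.apply_symm_apply]
    · rw [Finset.disjoint_left]
      rintro a haX haY
      obtain ⟨i, -, hi⟩ := Finset.mem_image.mp haX
      obtain ⟨j, -, hj⟩ := Finset.mem_image.mp haY
      have := congrArg Fin.val (ρ.injective (hi.trans hj.symm))
      simp only [Fin.coe_castAdd, Fin.coe_natAdd] at this
      have := i.isLt
      omega
    · intro x hx y hy
      obtain ⟨i, -, rfl⟩ := Finset.mem_image.mp hx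
      obtain ⟨j, -, rfl⟩ := Finset.mem_image.mp hy
      have hi := i.isLt
      constructor
      · show ρ.symm _ ≤ ρ.symm _
        simp only [Equiv.symm_apply_apply, Fin.le_def, Fin.coe_castAdd, Fin.coe_natAdd]
        omega
      · show ¬ ρ.symm _ ≤ ρ.symm _
        simp only [Equiv.symm_apply_apply, Fin.le_def, Fin.coe_castAdd, Fin.coe_natAdd]
        omega
    · have hfX : (fun k : Fin m => ρ (Fin.castAdd n (σ.symm k)))
          = (Finset.image (fun i => ρ (Fin.castAdd n i)) Finset.univ).orderEmbOfFin
            ((Finset.card_image_of_injective _ hci).trans (by simp)) := by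
        apply Finset.orderEmbOfFin_unique
        · intro x
          exact Finset.mem_image.mpr ⟨σ.symm x, Finset.mem_univ _, rfl⟩
        · intro a b hab
          exact (h1 _ _).mpr (by simpa using hab)
      ext ⟨u, v⟩
      simp only [restrict, chainPoset, Set.mem_setOf_eq, Finset.coe_orderIsoOfFin_apply,
        ← hfX, Equiv.symm_apply_apply, Fin.le_def, Fin.coe_castAdd]
    · have hfY : (fun k : Fin n => ρ (Fin.natAdd m (τ.symm k)))
          = (Finset.image (fun i => ρ (Fin.natAdd m i)) Finset.univ).orderEmbOfFin
            ((Finset.card_image_of_injective _ hni).trans (by simp)) := by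
        apply Finset.orderEmbOfFin_unique
        · intro x
          exact Finset.mem_image.mpr ⟨τ.symm x, Finset.mem_univ _, rfl⟩
        · intro a b hab
          exact (h2 _ _).mpr (by simpa using hab)
      ext ⟨u, v⟩
      simp only [restrict, chainPoset, Set.mem_setOf_eq, Finset.coe_orderIsoOfFin_apply,
        ← hfY, Equiv.symm_apply_apply, Fin.le_def, Fin.coe_natAdd]
      omega

end IntegerRelations
end

section
/- Let ≺ ∈ IPos_m and ⋖ ∈ IPos_n be integer posets. (i) If (≺ ⧢ ⋖) ∩ WOIP_{m+n} ≠ ∅, then ≺ ∈ WOIP_m and ⋖ ∈ WOIP_n. (ii) If ≺ ∈ WOIP_m and ⋖ ∈ WOIP_n, then ≺ ∗ ⋖ ⊆ WOIP_{m+n}. (iii) If (≺ ∗ ⋖) ∩ WOIP_{m+n} ≠ ∅, then ≺ ∈ WOIP_m and ⋖ ∈ WOIP_n. The same three statements hold with WOIP replaced throughout by IWOIP, and with WOIP replaced throughout by DWOIP. -/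
namespace IntegerRelations

section Aux

variable {m n : ℕ} {P : Set (Fin m × Fin m)} {Q : Set (Fin n × Fin n)}
  {T : Set (Fin (m + n) × Fin (m + n))}

lemma castAdd_lt_iff (a b : Fin m) :
    (Fin.castAdd n a : Fin (m + n)) < Fin.castAdd n b ↔ a < b := Iff.rfl

lemma natAdd_lt_iff (a b : Fin n) :
    (Fin.natAdd m a : Fin (m + n)) < Fin.natAdd m b ↔ a < b := by
  simp only [Fin.lt_def, Fin.coe_natAdd]; omega

lemma shuffle_low_iff (hT : T ∈ shiftedShuffle P Q) (a b : Fin m) :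
    (Fin.castAdd n a, Fin.castAdd n b) ∈ T ↔ (a, b) ∈ P := by
  obtain ⟨I, D, hI, hD, rfl⟩ := hT
  constructor
  · rintro (((⟨⟨y1, y2⟩, hy, heq⟩ | ⟨⟨y1, y2⟩, hy, heq⟩) | hmem) | hmem)
    · simp only [Prod.ext_iff, Fin.ext_iff, Fin.coe_castAdd] at heq
      have h1 : a = y1 := Fin.ext heq.1
      have h2 : b = y2 := Fin.ext heq.2
      rw [h1, h2]; exact hy
    · simp only [Prod.ext_iff, Fin.ext_iff, Fin.coe_castAdd, Fin.coe_natAdd] at heq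
      exact absurd heq.1 (by have := a.isLt; omega)
    · have := (hI hmem).2
      simp only [Fin.coe_castAdd] at this
      exact absurd this (by have := b.isLt; omega)
    · have := (hD hmem).1
      simp only [Fin.coe_castAdd] at this
      exact absurd this (by have := a.isLt; omega)
  · intro h
    exact Or.inl (Or.inl (Or.inl ⟨(a, b), h, rfl⟩))

lemma shuffle_high_iff (hT : T ∈ shiftedShuffle P Q) (a b : Fin n) :
    (Fin.natAdd m a, Fin.natAdd m b) ∈ T ↔ (a, b) ∈ Q := by
  obtain ⟨I, D, hI, hD, rfl⟩ := hT
  constructor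
  · rintro (((⟨⟨y1, y2⟩, hy, heq⟩ | ⟨⟨y1, y2⟩, hy, heq⟩) | hmem) | hmem)
    · simp only [Prod.ext_iff, Fin.ext_iff, Fin.coe_castAdd, Fin.coe_natAdd] at heq
      exact absurd heq.1 (by have := y1.isLt; omega)
    · simp only [Prod.ext_iff, Fin.ext_iff, Fin.coe_natAdd] at heq
      have h1 : a = y1 := Fin.ext (by omega)
      have h2 : b = y2 := Fin.ext (by omega)
      rw [h1, h2]; exact hy
    · have := (hI hmem).1
      simp only [Fin.coe_natAdd] at this
      exact absurd this (by omega)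
    · have := (hD hmem).2
      simp only [Fin.coe_natAdd] at this
      exact absurd this (by omega)
  · intro h
    exact Or.inl (Or.inl (Or.inr ⟨(a, b), h, rfl⟩))

lemma shuffle_IWOIP (hP : IsIPos P) (hQ : IsIPos Q)
    (hT : T ∈ shiftedShuffle P Q) (hTW : InIWOIP T) : InIWOIP P ∧ InIWOIP Q := by
  constructor
  · refine ⟨hP, fun a b c hab hbc hac => ?_⟩
    have := hTW.2 (Fin.castAdd n a) (Fin.castAdd n b) (Fin.castAdd n c)
      ((castAdd_lt_iff a b).2 hab) ((castAdd_lt_iff b c).2 hbc)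
      ((shuffle_low_iff hT a c).2 hac)
    rcases this with h | h
    · exact Or.inl ((shuffle_low_iff hT a b).1 h)
    · exact Or.inr ((shuffle_low_iff hT b c).1 h)
  · refine ⟨hQ, fun a b c hab hbc hac => ?_⟩
    have := hTW.2 (Fin.natAdd m a) (Fin.natAdd m b) (Fin.natAdd m c)
      ((natAdd_lt_iff a b).2 hab) ((natAdd_lt_iff b c).2 hbc)
      ((shuffle_high_iff hT a c).2 hac)
    rcases this with h | h
    · exact Or.inl ((shuffle_high_iff hT a b).1 h)
    · exact Or.inr ((shuffle_high_iff hT b c).1 h)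

lemma shuffle_DWOIP (hP : IsIPos P) (hQ : IsIPos Q)
    (hT : T ∈ shiftedShuffle P Q) (hTW : InDWOIP T) : InDWOIP P ∧ InDWOIP Q := by
  constructor
  · refine ⟨hP, fun a b c hab hbc hca => ?_⟩
    have := hTW.2 (Fin.castAdd n a) (Fin.castAdd n b) (Fin.castAdd n c)
      ((castAdd_lt_iff a b).2 hab) ((castAdd_lt_iff b c).2 hbc)
      ((shuffle_low_iff hT c a).2 hca)
    rcases this with h | h
    · exact Or.inl ((shuffle_low_iff hT b a).1 h)
    · exact Or.inr ((shuffle_low_iff hT c b).1 h)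
  · refine ⟨hQ, fun a b c hab hbc hca => ?_⟩
    have := hTW.2 (Fin.natAdd m a) (Fin.natAdd m b) (Fin.natAdd m c)
      ((natAdd_lt_iff a b).2 hab) ((natAdd_lt_iff b c).2 hbc)
      ((shuffle_high_iff hT c a).2 hca)
    rcases this with h | h
    · exact Or.inl ((shuffle_high_iff hT b a).1 h)
    · exact Or.inr ((shuffle_high_iff hT c b).1 h)

lemma conv_spec {p k : ℕ} {T : Set (Fin p × Fin p)} {X : Finset (Fin p)}
    {h : X.card = k} {R : Set (Fin k × Fin k)} (hres : restrict T X h = R)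
    (i j : Fin k) :
    ((X.orderIsoOfFin h i : Fin p), (X.orderIsoOfFin h j : Fin p)) ∈ T ↔ (i, j) ∈ R := by
  rw [← hres]; exact Iff.rfl

lemma mem_rep {p k : ℕ} (X : Finset (Fin p)) (h : X.card = k) {a : Fin p}
    (ha : a ∈ X) : ∃ i : Fin k, (X.orderIsoOfFin h i : Fin p) = a :=
  ⟨(X.orderIsoOfFin h).symm ⟨a, ha⟩,
    congrArg Subtype.val ((X.orderIsoOfFin h).apply_symm_apply ⟨a, ha⟩)⟩

lemma e_lt {p k : ℕ} (X : Finset (Fin p)) (h : X.card = k) (i j : Fin k) :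
    (X.orderIsoOfFin h i : Fin p) < (X.orderIsoOfFin h j : Fin p) ↔ i < j := by
  rw [Subtype.coe_lt_coe, OrderIso.lt_iff_lt]

lemma conv_IPos (hP : IsIPos P) (hQ : IsIPos Q) (hT : T ∈ convolution P Q) :
    IsIPos T := by
  obtain ⟨X, Y, hX, hY, ⟨htot, hdisj, hcut⟩, hresP, hresQ⟩ := hT
  refine ⟨?_, ?_, ?_⟩
  · intro a
    rcases htot a with ha | ha
    · obtain ⟨i, rfl⟩ := mem_rep X hX ha
      exact (conv_spec hresP i i).2 (hP.1 i)
    · obtain ⟨i, rfl⟩ := mem_rep Y hY ha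
      exact (conv_spec hresQ i i).2 (hQ.1 i)
  · intro a b hab hba
    rcases htot a with ha | ha <;> rcases htot b with hb | hb
    · obtain ⟨i, rfl⟩ := mem_rep X hX ha
      obtain ⟨j, rfl⟩ := mem_rep X hX hb
      exact congrArg (fun t => ((X.orderIsoOfFin hX t : Fin (m + n))))
        (hP.2.1 i j ((conv_spec hresP i j).1 hab) ((conv_spec hresP j i).1 hba))
    · exact absurd hba (hcut a ha b hb).2
    · exact absurd hab (hcut b hb a ha).2
    · obtain ⟨i, rfl⟩ := mem_rep Y hY ha
      obtain ⟨j, rfl⟩ := mem_rep Y hY hb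
      exact congrArg (fun t => ((Y.orderIsoOfFin hY t : Fin (m + n))))
        (hQ.2.1 i j ((conv_spec hresQ i j).1 hab) ((conv_spec hresQ j i).1 hba))
  · intro a b c hab hbc
    rcases htot b with hb | hb
    · rcases htot a with ha | ha
      · rcases htot c with hc | hc
        · obtain ⟨i, rfl⟩ := mem_rep X hX ha
          obtain ⟨j, rfl⟩ := mem_rep X hX hb
          obtain ⟨k, rfl⟩ := mem_rep X hX hc
          exact (conv_spec hresP i k).2
            (hP.2.2 i j k ((conv_spec hresP i j).1 hab) ((conv_spec hresP j k).1 hbc))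
        · exact (hcut a ha c hc).1
      · exact absurd hab (hcut b hb a ha).2
    · rcases htot c with hc | hc
      · exact absurd hbc (hcut c hc b hb).2
      · rcases htot a with ha | ha
        · exact (hcut a ha c hc).1
        · obtain ⟨i, rfl⟩ := mem_rep Y hY ha
          obtain ⟨j, rfl⟩ := mem_rep Y hY hb
          obtain ⟨k, rfl⟩ := mem_rep Y hY hc
          exact (conv_spec hresQ i k).2
            (hQ.2.2 i j k ((conv_spec hresQ i j).1 hab) ((conv_spec hresQ j k).1 hbc))

lemma conv_IWOIP (hPI : InIWOIP P) (hQI : InIWOIP Q) (hT : T ∈ convolution P Q) :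
    InIWOIP T := by
  refine ⟨conv_IPos hPI.1 hQI.1 hT, ?_⟩
  obtain ⟨X, Y, hX, hY, ⟨htot, hdisj, hcut⟩, hresP, hresQ⟩ := hT
  intro a b c hab hbc hac
  rcases htot b with hb | hb
  · rcases htot c with hc | hc
    · rcases htot a with ha | ha
      · obtain ⟨i, rfl⟩ := mem_rep X hX ha
        obtain ⟨j, rfl⟩ := mem_rep X hX hb
        obtain ⟨k, rfl⟩ := mem_rep X hX hc
        rcases hPI.2 i j k ((e_lt X hX i j).1 hab) ((e_lt X hX j k).1 hbc)
            ((conv_spec hresP i k).1 hac) with h | h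
        · exact Or.inl ((conv_spec hresP i j).2 h)
        · exact Or.inr ((conv_spec hresP j k).2 h)
      · exact absurd hac (hcut c hc a ha).2
    · exact Or.inr (hcut b hb c hc).1
  · rcases htot a with ha | ha
    · exact Or.inl (hcut a ha b hb).1
    · rcases htot c with hc | hc
      · exact absurd hac (hcut c hc a ha).2
      · obtain ⟨i, rfl⟩ := mem_rep Y hY ha
        obtain ⟨j, rfl⟩ := mem_rep Y hY hb
        obtain ⟨k, rfl⟩ := mem_rep Y hY hc
        rcases hQI.2 i j k ((e_lt Y hY i j).1 hab) ((e_lt Y hY j k).1 hbc)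
            ((conv_spec hresQ i k).1 hac) with h | h
        · exact Or.inl ((conv_spec hresQ i j).2 h)
        · exact Or.inr ((conv_spec hresQ j k).2 h)

lemma conv_DWOIP (hPI : InDWOIP P) (hQI : InDWOIP Q) (hT : T ∈ convolution P Q) :
    InDWOIP T := by
  refine ⟨conv_IPos hPI.1 hQI.1 hT, ?_⟩
  obtain ⟨X, Y, hX, hY, ⟨htot, hdisj, hcut⟩, hresP, hresQ⟩ := hT
  intro a b c hab hbc hca
  rcases htot b with hb | hb
  · rcases htot a with ha | ha
    · rcases htot c with hc | hc
      · obtain ⟨i, rfl⟩ := mem_rep X hX ha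
        obtain ⟨j, rfl⟩ := mem_rep X hX hb
        obtain ⟨k, rfl⟩ := mem_rep X hX hc
        rcases hPI.2 i j k ((e_lt X hX i j).1 hab) ((e_lt X hX j k).1 hbc)
            ((conv_spec hresP k i).1 hca) with h | h
        · exact Or.inl ((conv_spec hresP j i).2 h)
        · exact Or.inr ((conv_spec hresP k j).2 h)
      · exact absurd hca (hcut a ha c hc).2
    · exact Or.inl (hcut b hb a ha).1
  · rcases htot c with hc | hc
    · exact Or.inr (hcut c hc b hb).1
    · rcases htot a with ha | ha
      · exact absurd hca (hcut a ha c hc).2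
      · obtain ⟨i, rfl⟩ := mem_rep Y hY ha
        obtain ⟨j, rfl⟩ := mem_rep Y hY hb
        obtain ⟨k, rfl⟩ := mem_rep Y hY hc
        rcases hQI.2 i j k ((e_lt Y hY i j).1 hab) ((e_lt Y hY j k).1 hbc)
            ((conv_spec hresQ k i).1 hca) with h | h
        · exact Or.inl ((conv_spec hresQ j i).2 h)
        · exact Or.inr ((conv_spec hresQ k j).2 h)

lemma conv_rev_IWOIP (hP : IsIPos P) (hQ : IsIPos Q) (hT : T ∈ convolution P Q)
    (hTW : InIWOIP T) : InIWOIP P ∧ InIWOIP Q := by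
  obtain ⟨X, Y, hX, hY, hcut, hresP, hresQ⟩ := hT
  constructor
  · refine ⟨hP, fun i j k hij hjk hik => ?_⟩
    rcases hTW.2 _ _ _ ((e_lt X hX i j).2 hij) ((e_lt X hX j k).2 hjk)
        ((conv_spec hresP i k).2 hik) with h | h
    · exact Or.inl ((conv_spec hresP i j).1 h)
    · exact Or.inr ((conv_spec hresP j k).1 h)
  · refine ⟨hQ, fun i j k hij hjk hik => ?_⟩
    rcases hTW.2 _ _ _ ((e_lt Y hY i j).2 hij) ((e_lt Y hY j k).2 hjk)
        ((conv_spec hresQ i k).2 hik) with h | h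
    · exact Or.inl ((conv_spec hresQ i j).1 h)
    · exact Or.inr ((conv_spec hresQ j k).1 h)

lemma conv_rev_DWOIP (hP : IsIPos P) (hQ : IsIPos Q) (hT : T ∈ convolution P Q)
    (hTW : InDWOIP T) : InDWOIP P ∧ InDWOIP Q := by
  obtain ⟨X, Y, hX, hY, hcut, hresP, hresQ⟩ := hT
  constructor
  · refine ⟨hP, fun i j k hij hjk hki => ?_⟩
    rcases hTW.2 _ _ _ ((e_lt X hX i j).2 hij) ((e_lt X hX j k).2 hjk)
        ((conv_spec hresP k i).2 hki) with h | h
    · exact Or.inl ((conv_spec hresP j i).1 h)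
    · exact Or.inr ((conv_spec hresP k j).1 h)
  · refine ⟨hQ, fun i j k hij hjk hki => ?_⟩
    rcases hTW.2 _ _ _ ((e_lt Y hY i j).2 hij) ((e_lt Y hY j k).2 hjk)
        ((conv_spec hresQ k i).2 hki) with h | h
    · exact Or.inl ((conv_spec hresQ j i).1 h)
    · exact Or.inr ((conv_spec hresQ k j).1 h)

end Aux

/-- `WOIP`, `IWOIP` and `DWOIP` and the shifted shuffle /
convolution. -/
theorem WOIP_shuffle_convolution (m n : ℕ)
    (P : Set (Fin m × Fin m)) (Q : Set (Fin n × Fin n))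
    (hP : IsIPos P) (hQ : IsIPos Q) :
    (((∃ T ∈ shiftedShuffle P Q, InWOIP T) → InWOIP P ∧ InWOIP Q) ∧
      ((InWOIP P ∧ InWOIP Q) → ∀ T ∈ convolution P Q, InWOIP T) ∧
      ((∃ T ∈ convolution P Q, InWOIP T) → InWOIP P ∧ InWOIP Q)) ∧
    (((∃ T ∈ shiftedShuffle P Q, InIWOIP T) → InIWOIP P ∧ InIWOIP Q) ∧
      ((InIWOIP P ∧ InIWOIP Q) → ∀ T ∈ convolution P Q, InIWOIP T) ∧
      ((∃ T ∈ convolution P Q, InIWOIP T) → InIWOIP P ∧ InIWOIP Q)) ∧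
    (((∃ T ∈ shiftedShuffle P Q, InDWOIP T) → InDWOIP P ∧ InDWOIP Q) ∧
      ((InDWOIP P ∧ InDWOIP Q) → ∀ T ∈ convolution P Q, InDWOIP T) ∧
      ((∃ T ∈ convolution P Q, InDWOIP T) → InDWOIP P ∧ InDWOIP Q)) := by
  refine ⟨⟨?_, ?_, ?_⟩, ⟨?_, ?_, ?_⟩, ⟨?_, ?_, ?_⟩⟩
  · rintro ⟨T, hT, hTW⟩
    obtain ⟨hPI, hQI⟩ := shuffle_IWOIP hP hQ hT hTW.1
    obtain ⟨hPD, hQD⟩ := shuffle_DWOIP hP hQ hT hTW.2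
    exact ⟨⟨hPI, hPD⟩, ⟨hQI, hQD⟩⟩
  · rintro ⟨hPW, hQW⟩ T hT
    exact ⟨conv_IWOIP hPW.1 hQW.1 hT, conv_DWOIP hPW.2 hQW.2 hT⟩
  · rintro ⟨T, hT, hTW⟩
    obtain ⟨hPI, hQI⟩ := conv_rev_IWOIP hP hQ hT hTW.1
    obtain ⟨hPD, hQD⟩ := conv_rev_DWOIP hP hQ hT hTW.2
    exact ⟨⟨hPI, hPD⟩, ⟨hQI, hQD⟩⟩
  · rintro ⟨T, hT, hTW⟩
    exact shuffle_IWOIP hP hQ hT hTW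
  · rintro ⟨hPW, hQW⟩ T hT
    exact conv_IWOIP hPW hQW hT
  · rintro ⟨T, hT, hTW⟩
    exact conv_rev_IWOIP hP hQ hT hTW
  · rintro ⟨T, hT, hTW⟩
    exact shuffle_DWOIP hP hQ hT hTW
  · rintro ⟨hPW, hQW⟩ T hT
    exact conv_DWOIP hPW hQW hT
  · rintro ⟨T, hT, hTW⟩
    exact conv_rev_DWOIP hP hQ hT hTW

end IntegerRelations
end

section
/- Let ≺ ∈ IPos_m and ⋖ ∈ IPos_n be integer posets. (i) If (≺ ⧢ ⋖) ∩ WOFP_{m+n} ≠ ∅, then ≺ ∈ WOFP_m and ⋖ ∈ WOFP_n. (ii) If ≺ ∈ WOFP_m and ⋖ ∈ WOFP_n, then ≺ ∗ ⋖ ⊆ WOFP_{m+n}. (iii) If (≺ ∗ ⋖) ∩ WOFP_{m+n} ≠ ∅, then ≺ ∈ WOFP_m and ⋖ ∈ WOFP_n. -/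
namespace IntegerRelations

/-- Pulling back `InWOFP` along a strictly monotone map that identifies `P`
with a sub-relation of `T`. -/
lemma pullback_WOFP {k p : ℕ} {f : Fin k → Fin p} (hf : StrictMono f)
    {T : Set (Fin p × Fin p)} {P : Set (Fin k × Fin k)}
    (hiff : ∀ i j : Fin k, (i, j) ∈ P ↔ (f i, f j) ∈ T)
    (hT : InWOFP T) : InWOFP P := by
  obtain ⟨⟨⟨⟨hrefl, hanti, htrans⟩, hiw⟩, ⟨-, hdw⟩⟩, hw⟩ := hT
  have hpos : IsIPos P :=
    ⟨fun i => (hiff i i).2 (hrefl (f i)),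
      fun a b hab hba =>
        hf.injective (hanti _ _ ((hiff a b).1 hab) ((hiff b a).1 hba)),
      fun a b c hab hbc =>
        (hiff a c).2 (htrans _ _ _ ((hiff a b).1 hab) ((hiff b c).1 hbc))⟩
  refine ⟨⟨⟨hpos, ?_⟩, ⟨hpos, ?_⟩⟩, ?_⟩
  · intro a b c hab hbc h
    rcases hiw (f a) (f b) (f c) (hf hab) (hf hbc) ((hiff a c).1 h) with h' | h'
    · exact Or.inl ((hiff a b).2 h')
    · exact Or.inr ((hiff b c).2 h')
  · intro a b c hab hbc h
    rcases hdw (f a) (f b) (f c) (hf hab) (hf hbc) ((hiff c a).1 h) with h' | h'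
    · exact Or.inl ((hiff b a).2 h')
    · exact Or.inr ((hiff c b).2 h')
  · intro a b c hab hbc h1 h2
    have hw' := hw (f a) (f b) (f c) (hf hab) (hf hbc)
      (fun h => h1 ((hiff a c).2 h)) (fun h => h2 ((hiff c a).2 h))
    exact ⟨⟨fun h => (hiff c b).2 (hw'.1.1 ((hiff a b).1 h)),
            fun h => (hiff a b).2 (hw'.1.2 ((hiff c b).1 h))⟩,
           ⟨fun h => (hiff b c).2 (hw'.2.1 ((hiff b a).1 h)),
            fun h => (hiff b a).2 (hw'.2.2 ((hiff b c).1 h))⟩⟩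

/-- `WOFP` and the shifted shuffle / convolution. -/
theorem WOFP_shuffle_convolution (m n : ℕ)
    (P : Set (Fin m × Fin m)) (Q : Set (Fin n × Fin n))
    (hP : IsIPos P) (hQ : IsIPos Q) :
    ((∃ T ∈ shiftedShuffle P Q, InWOFP T) → InWOFP P ∧ InWOFP Q) ∧
    ((InWOFP P ∧ InWOFP Q) → ∀ T ∈ convolution P Q, InWOFP T) ∧
    ((∃ T ∈ convolution P Q, InWOFP T) → InWOFP P ∧ InWOFP Q) := by
  have hmcast : StrictMono (fun i : Fin m => Fin.castAdd n i) := by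
    intro a b h
    simp only [Fin.lt_def, Fin.coe_castAdd]
    exact Fin.lt_def.1 h
  have hmnat : StrictMono (fun i : Fin n => Fin.natAdd m i) := by
    intro a b h
    simp only [Fin.lt_def, Fin.coe_natAdd]
    exact Nat.add_lt_add_left (Fin.lt_def.1 h) m
  refine ⟨?_, ?_, ?_⟩
  · -- (i) shifted shuffle
    rintro ⟨T, ⟨I, D, hI, hD, rfl⟩, hT⟩
    constructor
    · refine pullback_WOFP hmcast (fun i j => ?_) hT
      constructor
      · intro h; exact Or.inl (Or.inl (Or.inl ⟨(i, j), h, rfl⟩))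
      · rintro ((((⟨⟨y1, y2⟩, hy, heq⟩ | ⟨y, hy, heq⟩) | hmem) | hmem))
        · simp only [Prod.ext_iff, Fin.ext_iff, Fin.coe_castAdd] at heq
          have h1 : y1 = i := Fin.ext heq.1.symm
          have h2 : y2 = j := Fin.ext heq.2.symm
          subst h1; subst h2; exact hy
        · exfalso
          simp only [Prod.ext_iff, Fin.ext_iff, Fin.coe_castAdd,
            Fin.coe_natAdd] at heq
          omega
        · exfalso
          have := (hI hmem).2
          simp only [Fin.coe_castAdd] at this
          omega
        · exfalso
          have := (hD hmem).1
          simp only [Fin.coe_castAdd] at this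
          omega
    · refine pullback_WOFP hmnat (fun i j => ?_) hT
      constructor
      · intro h; exact Or.inl (Or.inl (Or.inr ⟨(i, j), h, rfl⟩))
      · rintro ((((⟨y, hy, heq⟩ | ⟨⟨y1, y2⟩, hy, heq⟩) | hmem) | hmem))
        · exfalso
          simp only [Prod.ext_iff, Fin.ext_iff, Fin.coe_castAdd,
            Fin.coe_natAdd] at heq
          omega
        · simp only [Prod.ext_iff, Fin.ext_iff, Fin.coe_natAdd] at heq
          have h1 : y1 = i := Fin.ext (by omega)
          have h2 : y2 = j := Fin.ext (by omega)
          subst h1; subst h2; exact hy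
        · exfalso
          have := (hI hmem).1
          simp only [Fin.coe_natAdd] at this
          omega
        · exfalso
          have := (hD hmem).2
          simp only [Fin.coe_natAdd] at this
          omega
  · -- (ii) convolution preserves WOFP
    rintro ⟨hPw, hQw⟩ T ⟨X, Y, hX, hY, ⟨hcov, hdisj, hcut⟩, hPX, hQY⟩
    obtain ⟨⟨⟨⟨hPrefl, hPanti, hPtrans⟩, hPiw⟩, ⟨-, hPdw⟩⟩, hPwf⟩ := hPw
    obtain ⟨⟨⟨⟨hQrefl, hQanti, hQtrans⟩, hQiw⟩, ⟨-, hQdw⟩⟩, hQwf⟩ := hQw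
    set fX : Fin m → Fin (m + n) := fun i => (X.orderIsoOfFin hX i : Fin (m + n))
      with hfX
    set fY : Fin n → Fin (m + n) := fun i => (Y.orderIsoOfFin hY i : Fin (m + n))
      with hfY
    have hPiff : ∀ i j, (i, j) ∈ P ↔ (fX i, fX j) ∈ T := by
      intro i j; rw [← hPX]; exact Iff.rfl
    have hQiff : ∀ i j, (i, j) ∈ Q ↔ (fY i, fY j) ∈ T := by
      intro i j; rw [← hQY]; exact Iff.rfl
    have hfXmem : ∀ i, fX i ∈ X := fun i => (X.orderIsoOfFin hX i).2
    have hfYmem : ∀ i, fY i ∈ Y := fun i => (Y.orderIsoOfFin hY i).2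
    have hXsurj : ∀ x ∈ X, ∃ i, fX i = x := fun x hx =>
      ⟨(X.orderIsoOfFin hX).symm ⟨x, hx⟩,
        congrArg Subtype.val ((X.orderIsoOfFin hX).apply_symm_apply ⟨x, hx⟩)⟩
    have hYsurj : ∀ y ∈ Y, ∃ i, fY i = y := fun y hy =>
      ⟨(Y.orderIsoOfFin hY).symm ⟨y, hy⟩,
        congrArg Subtype.val ((Y.orderIsoOfFin hY).apply_symm_apply ⟨y, hy⟩)⟩
    have hmX : StrictMono fX := fun a b h =>
      Subtype.coe_lt_coe.2 ((X.orderIsoOfFin hX).strictMono h)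
    have hmY : StrictMono fY := fun a b h =>
      Subtype.coe_lt_coe.2 ((Y.orderIsoOfFin hY).strictMono h)
    have cross : ∀ x ∈ X, ∀ y ∈ Y, (x, y) ∈ T := fun x hx y hy =>
      (hcut x hx y hy).1
    have crossN : ∀ x ∈ X, ∀ y ∈ Y, (y, x) ∉ T := fun x hx y hy =>
      (hcut x hx y hy).2
    have hpos : IsIPos T := by
      refine ⟨?_, ?_, ?_⟩
      · intro z
        rcases hcov z with hz | hz
        · obtain ⟨i, rfl⟩ := hXsurj z hz; exact (hPiff i i).1 (hPrefl i)
        · obtain ⟨i, rfl⟩ := hYsurj z hz; exact (hQiff i i).1 (hQrefl i)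
      · intro a b hab hba
        rcases hcov a with ha | ha <;> rcases hcov b with hb | hb
        · obtain ⟨i, rfl⟩ := hXsurj a ha; obtain ⟨j, rfl⟩ := hXsurj b hb
          exact congrArg fX (hPanti i j ((hPiff i j).2 hab) ((hPiff j i).2 hba))
        · exact absurd hba (crossN a ha b hb)
        · exact absurd hab (crossN b hb a ha)
        · obtain ⟨i, rfl⟩ := hYsurj a ha; obtain ⟨j, rfl⟩ := hYsurj b hb
          exact congrArg fY (hQanti i j ((hQiff i j).2 hab) ((hQiff j i).2 hba))
      · intro a b c hab hbc
        rcases hcov a with ha | ha <;> rcases hcov b with hb | hb <;>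
          rcases hcov c with hc | hc
        · obtain ⟨i, rfl⟩ := hXsurj a ha; obtain ⟨j, rfl⟩ := hXsurj b hb
          obtain ⟨k, rfl⟩ := hXsurj c hc
          exact (hPiff i k).1 (hPtrans i j k ((hPiff i j).2 hab) ((hPiff j k).2 hbc))
        · exact cross a ha c hc
        · exact absurd hbc (crossN c hc b hb)
        · exact cross a ha c hc
        · exact absurd hab (crossN b hb a ha)
        · exact absurd hab (crossN b hb a ha)
        · exact absurd hbc (crossN c hc b hb)
        · obtain ⟨i, rfl⟩ := hYsurj a ha; obtain ⟨j, rfl⟩ := hYsurj b hb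
          obtain ⟨k, rfl⟩ := hYsurj c hc
          exact (hQiff i k).1 (hQtrans i j k ((hQiff i j).2 hab) ((hQiff j k).2 hbc))
    refine ⟨⟨⟨hpos, ?_⟩, ⟨hpos, ?_⟩⟩, ?_⟩
    · -- IWOIP
      intro a b c hab hbc hac
      rcases hcov a with ha | ha <;> rcases hcov b with hb | hb <;>
        rcases hcov c with hc | hc
      · obtain ⟨i, rfl⟩ := hXsurj a ha; obtain ⟨j, rfl⟩ := hXsurj b hb
        obtain ⟨k, rfl⟩ := hXsurj c hc
        rcases hPiw i j k (hmX.lt_iff_lt.1 hab) (hmX.lt_iff_lt.1 hbc)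
            ((hPiff i k).2 hac) with h | h
        · exact Or.inl ((hPiff i j).1 h)
        · exact Or.inr ((hPiff j k).1 h)
      · exact Or.inr (cross b hb c hc)
      · exact Or.inl (cross a ha b hb)
      · exact Or.inl (cross a ha b hb)
      · exact absurd hac (crossN c hc a ha)
      · exact Or.inr (cross b hb c hc)
      · exact absurd hac (crossN c hc a ha)
      · obtain ⟨i, rfl⟩ := hYsurj a ha; obtain ⟨j, rfl⟩ := hYsurj b hb
        obtain ⟨k, rfl⟩ := hYsurj c hc
        rcases hQiw i j k (hmY.lt_iff_lt.1 hab) (hmY.lt_iff_lt.1 hbc)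
            ((hQiff i k).2 hac) with h | h
        · exact Or.inl ((hQiff i j).1 h)
        · exact Or.inr ((hQiff j k).1 h)
    · -- DWOIP
      intro a b c hab hbc hca
      rcases hcov a with ha | ha <;> rcases hcov b with hb | hb <;>
        rcases hcov c with hc | hc
      · obtain ⟨i, rfl⟩ := hXsurj a ha; obtain ⟨j, rfl⟩ := hXsurj b hb
        obtain ⟨k, rfl⟩ := hXsurj c hc
        rcases hPdw i j k (hmX.lt_iff_lt.1 hab) (hmX.lt_iff_lt.1 hbc)
            ((hPiff k i).2 hca) with h | h
        · exact Or.inl ((hPiff j i).1 h)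
        · exact Or.inr ((hPiff k j).1 h)
      · exact absurd hca (crossN a ha c hc)
      · exact Or.inr (cross c hc b hb)
      · exact absurd hca (crossN a ha c hc)
      · exact Or.inl (cross b hb a ha)
      · exact Or.inl (cross b hb a ha)
      · exact Or.inr (cross c hc b hb)
      · obtain ⟨i, rfl⟩ := hYsurj a ha; obtain ⟨j, rfl⟩ := hYsurj b hb
        obtain ⟨k, rfl⟩ := hYsurj c hc
        rcases hQdw i j k (hmY.lt_iff_lt.1 hab) (hmY.lt_iff_lt.1 hbc)
            ((hQiff k i).2 hca) with h | h
        · exact Or.inl ((hQiff j i).1 h)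
        · exact Or.inr ((hQiff k j).1 h)
    · -- WOFP condition
      intro a b c hab hbc h1 h2
      rcases hcov a with ha | ha <;> rcases hcov c with hc | hc
      · rcases hcov b with hb | hb
        · obtain ⟨i, rfl⟩ := hXsurj a ha; obtain ⟨j, rfl⟩ := hXsurj b hb
          obtain ⟨k, rfl⟩ := hXsurj c hc
          have hw := hPwf i j k (hmX.lt_iff_lt.1 hab) (hmX.lt_iff_lt.1 hbc)
            (fun h => h1 ((hPiff i k).1 h)) (fun h => h2 ((hPiff k i).1 h))
          exact ⟨⟨fun h => (hPiff k j).1 (hw.1.1 ((hPiff i j).2 h)),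
                  fun h => (hPiff i j).1 (hw.1.2 ((hPiff k j).2 h))⟩,
                 ⟨fun h => (hPiff j k).1 (hw.2.1 ((hPiff j i).2 h)),
                  fun h => (hPiff j i).1 (hw.2.2 ((hPiff j k).2 h))⟩⟩
        · exact ⟨iff_of_true (cross a ha b hb) (cross c hc b hb),
            iff_of_false (crossN a ha b hb) (crossN c hc b hb)⟩
      · exact absurd (cross a ha c hc) h1
      · exact absurd (cross c hc a ha) h2
      · rcases hcov b with hb | hb
        · exact ⟨iff_of_false (crossN b hb a ha) (crossN b hb c hc),
            iff_of_true (cross b hb a ha) (cross b hb c hc)⟩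
        · obtain ⟨i, rfl⟩ := hYsurj a ha; obtain ⟨j, rfl⟩ := hYsurj b hb
          obtain ⟨k, rfl⟩ := hYsurj c hc
          have hw := hQwf i j k (hmY.lt_iff_lt.1 hab) (hmY.lt_iff_lt.1 hbc)
            (fun h => h1 ((hQiff i k).1 h)) (fun h => h2 ((hQiff k i).1 h))
          exact ⟨⟨fun h => (hQiff k j).1 (hw.1.1 ((hQiff i j).2 h)),
                  fun h => (hQiff i j).1 (hw.1.2 ((hQiff k j).2 h))⟩,
                 ⟨fun h => (hQiff j k).1 (hw.2.1 ((hQiff j i).2 h)),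
                  fun h => (hQiff j i).1 (hw.2.2 ((hQiff j k).2 h))⟩⟩
  · -- (iii) convolution
    rintro ⟨T, ⟨X, Y, hX, hY, -, hPX, hQY⟩, hT⟩
    have hmXc : StrictMono (fun i : Fin m => (X.orderIsoOfFin hX i : Fin (m + n))) :=
      fun a b h => Subtype.coe_lt_coe.2 ((X.orderIsoOfFin hX).strictMono h)
    have hmYc : StrictMono (fun i : Fin n => (Y.orderIsoOfFin hY i : Fin (m + n))) :=
      fun a b h => Subtype.coe_lt_coe.2 ((Y.orderIsoOfFin hY).strictMono h)
    exact ⟨pullback_WOFP hmXc (fun i j => by rw [← hPX]; exact Iff.rfl) hT,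
      pullback_WOFP hmYc (fun i j => by rw [← hQY]; exact Iff.rfl) hT⟩

end IntegerRelations
end

section
/- Let ≺ ∈ IPos_p. A partition [p] = X ⊔ Y is a total cut of ≺ if and only if it is a total cut of WOIPd(≺). Moreover, if (X,Y) is a total cut of ≺, then (WOIPd ≺)_X = WOIPd(≺_X) and (WOIPd ≺)_Y = WOIPd(≺_Y). The same statements hold with WOIPd replaced by IWOIPid or by DWOIPdd. -/
namespace List

theorem exists_isChain_comp_iff {α β : Type*} {s : β → β → Prop} {f : α → β} {a c : α}
    (hrange : ∀ l, IsChain s (f a :: l ++ [f c]) → ∀ x ∈ l, x ∈ Set.range f) :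
    (∃ l, l ≠ [] ∧ IsChain s (f a :: l ++ [f c])) ↔
      ∃ l, l ≠ [] ∧ IsChain (fun x y => s (f x) (f y)) (a :: l ++ [c]) := by
  have hmap (l : List α) : f a :: l.map f ++ [f c] = (a :: l ++ [c]).map f := by simp
  constructor
  · rintro ⟨l, hl, hchain⟩
    have : Nonempty α := ⟨a⟩
    have hl_eq : (l.map (Function.invFun f)).map f = l := by
      rw [map_map]
      exact map_congr_left (fun x hx => Function.invFun_eq (hrange l hchain x hx)) |>.trans
        (map_id l)
    refine ⟨l.map (Function.invFun f), by simpa using hl, ?_⟩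
    rw [← isChain_map, ← hmap, hl_eq]
    exact hchain
  · rintro ⟨l, hl, hchain⟩
    exact ⟨l.map f, by simpa using hl, by rw [hmap, isChain_map]; exact hchain⟩

end List

namespace IntegerRelations

open List

theorem mem_restrict {p k : ℕ} {T : Set (Fin p × Fin p)} {Z : Finset (Fin p)} {hk : Z.card = k}
    {i j : Fin k} :
    (i, j) ∈ restrict T Z hk ↔ (Z.orderEmbOfFin hk i, Z.orderEmbOfFin hk j) ∈ T := by
  simp [restrict, Finset.coe_orderIsoOfFin_apply]

def IncNonRel {p : ℕ} (T : Set (Fin p × Fin p)) (a b : Fin p) : Prop :=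
  a < b ∧ (a, b) ∉ T

section TotalCut

variable {p : ℕ} {S T : Set (Fin p × Fin p)} {X Y : Finset (Fin p)}

theorem isTotalCut_inv : IsTotalCut (SetRel.inv T) Y X ↔ IsTotalCut T X Y := by
  constructor <;> rintro ⟨hcover, hdisj, hcut⟩ <;>
    exact ⟨fun i => (hcover i).symm, hdisj.symm, fun x hx y hy => hcut y hy x hx⟩

theorem IsTotalCut.of_subset (h : IsTotalCut S X Y) (hST : S ⊆ T)
    (hT : ∀ a b, (a, b) ∈ T → (b, a) ∈ T → a = b) : IsTotalCut T X Y := by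
  obtain ⟨hcover, hdisj, hcut⟩ := h
  refine ⟨hcover, hdisj, fun x hx y hy => ⟨hST (hcut x hx y hy).1, fun hyx => ?_⟩⟩
  obtain rfl := hT x y (hST (hcut x hx y hy).1) hyx
  exact Finset.disjoint_left.mp hdisj hx hy

theorem IsTotalCut.forall_mem_left_of_isChain (h : IsTotalCut T X Y) {a : Fin p}
    {l : List (Fin p)} (hchain : IsChain (IncNonRel T) (a :: l)) (ha : a ∈ X) :
    ∀ x ∈ l, x ∈ X :=
  hchain.cons_induction (· ∈ X) _
    (fun _ b hab ha => (h.1 b).resolve_right fun hb => hab.2 (h.2.2 _ ha b hb).1) ha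

theorem IsTotalCut.forall_mem_right_of_isChain (h : IsTotalCut T X Y) {c : Fin p}
    {l : List (Fin p)} (hchain : IsChain (IncNonRel T) (l ++ [c])) (hc : c ∈ Y) :
    ∀ x ∈ l, x ∈ Y :=
  hchain.backwards_concat_induction (· ∈ Y) _
    (fun a _ hab hb => (h.1 a).resolve_left fun ha => hab.2 (h.2.2 a ha _ hb).1) hc

theorem IsTotalCut.isTotalCut_IWOIPid (h : IsTotalCut T X Y) : IsTotalCut (IWOIPid T) X Y := by
  refine ⟨h.1, h.2.1, fun x hx y hy =>
    ⟨⟨(h.2.2 x hx y hy).1, ?_⟩, fun hyx => (h.2.2 x hx y hy).2 hyx.1⟩⟩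
  rintro ⟨-, l, -, hchain⟩
  have hyX : y ∈ X := h.forall_mem_left_of_isChain hchain hx y (by simp)
  exact Finset.disjoint_left.mp h.2.1 hyX hy

end TotalCut

section Restrict

variable {p k : ℕ} {T : Set (Fin p × Fin p)}

theorem mem_IWOIPid {x : Fin p × Fin p} :
    x ∈ IWOIPid T ↔
      x ∈ T ∧ ¬ (x.1 < x.2 ∧ ∃ l, l ≠ [] ∧ IsChain (IncNonRel T) (x.1 :: l ++ [x.2])) :=
  Iff.rfl

theorem restrict_IWOIPid (Z : Finset (Fin p)) (hk : Z.card = k)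
    (hZ : ∀ a ∈ Z, ∀ c ∈ Z, ∀ l, IsChain (IncNonRel T) (a :: l ++ [c]) → ∀ x ∈ l, x ∈ Z) :
    restrict (IWOIPid T) Z hk = IWOIPid (restrict T Z hk) := by
  have hstep : IncNonRel (restrict T Z hk) =
      fun a b => IncNonRel T (Z.orderEmbOfFin hk a) (Z.orderEmbOfFin hk b) := by
    ext a b
    simp only [IncNonRel, mem_restrict, OrderEmbedding.lt_iff_lt]
  ext ⟨i, j⟩
  simp only [mem_restrict, mem_IWOIPid, hstep, OrderEmbedding.lt_iff_lt]
  rw [exists_isChain_comp_iff]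
  intro l hl
  simpa [Finset.range_orderEmbOfFin] using hZ _ (by simp) _ (by simp) l hl

theorem IsTotalCut.restrict_IWOIPid_left {X Y : Finset (Fin p)} (h : IsTotalCut T X Y) :
    restrict (IWOIPid T) X rfl = IWOIPid (restrict T X rfl) :=
  restrict_IWOIPid X rfl fun _ ha _ _ _ hchain x hx =>
    h.forall_mem_left_of_isChain hchain ha x (mem_append_left _ hx)

theorem IsTotalCut.restrict_IWOIPid_right {X Y : Finset (Fin p)} (h : IsTotalCut T X Y) :
    restrict (IWOIPid T) Y rfl = IWOIPid (restrict T Y rfl) :=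
  restrict_IWOIPid Y rfl fun a _ _ hc l hchain x hx =>
    h.forall_mem_right_of_isChain (l := a :: l) hchain hc x (mem_cons_of_mem a hx)

end Restrict

def RespectsTotalCuts (F : ∀ {p : ℕ}, Set (Fin p × Fin p) → Set (Fin p × Fin p)) : Prop :=
  ∀ {p : ℕ} {T : Set (Fin p × Fin p)} {X Y : Finset (Fin p)}, IsTotalCut T X Y →
    IsTotalCut (F T) X Y ∧ restrict (F T) X rfl = F (restrict T X rfl) ∧
      restrict (F T) Y rfl = F (restrict T Y rfl)

namespace RespectsTotalCuts

variable {F G : ∀ {p : ℕ}, Set (Fin p × Fin p) → Set (Fin p × Fin p)}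

theorem comp (hF : RespectsTotalCuts F) (hG : RespectsTotalCuts G) :
    RespectsTotalCuts (fun T => F (G T)) := by
  intro p T X Y h
  obtain ⟨hG, hGX, hGY⟩ := hG h
  obtain ⟨hF, hFX, hFY⟩ := hF hG
  exact ⟨hF, hFX.trans (congrArg F hGX), hFY.trans (congrArg F hGY)⟩

theorem conj_inv (hF : RespectsTotalCuts F) :
    RespectsTotalCuts (fun T => SetRel.inv (F (SetRel.inv T))) := by
  intro p T X Y h
  obtain ⟨hcut, hY, hX⟩ := hF (isTotalCut_inv.mpr h)
  exact ⟨isTotalCut_inv.mp hcut, congrArg SetRel.inv hX, congrArg SetRel.inv hY⟩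

theorem isTotalCut_iff_and_restrict {p : ℕ} {T : Set (Fin p × Fin p)} {X Y : Finset (Fin p)}
    (hF : RespectsTotalCuts F) (hsub : F T ⊆ T) (hT : ∀ a b, (a, b) ∈ T → (b, a) ∈ T → a = b) :
    (IsTotalCut T X Y ↔ IsTotalCut (F T) X Y) ∧
      (IsTotalCut T X Y →
        restrict (F T) X rfl = F (restrict T X rfl) ∧
        restrict (F T) Y rfl = F (restrict T Y rfl)) :=
  ⟨⟨fun h => (hF h).1, fun h => h.of_subset hsub hT⟩, fun h => (hF h).2⟩

end RespectsTotalCuts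

theorem respectsTotalCuts_IWOIPid : RespectsTotalCuts IWOIPid := fun h =>
  ⟨h.isTotalCut_IWOIPid, h.restrict_IWOIPid_left, h.restrict_IWOIPid_right⟩

-- `DWOIPdd T` unfolds to the transpose of `IWOIPid` of the transpose of `T`.
theorem respectsTotalCuts_DWOIPdd : RespectsTotalCuts DWOIPdd :=
  respectsTotalCuts_IWOIPid.conj_inv

theorem respectsTotalCuts_WOIPd : RespectsTotalCuts WOIPd :=
  respectsTotalCuts_IWOIPid.comp respectsTotalCuts_DWOIPdd

/-- total cuts and the `WOIP`, `IWOIP`, `DWOIP` deletions. -/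
theorem WOIPd_totalCut (p : ℕ) (T : Set (Fin p × Fin p)) (hT : IsIPos T)
    (X Y : Finset (Fin p)) :
    ((IsTotalCut T X Y ↔ IsTotalCut (WOIPd T) X Y) ∧
      (IsTotalCut T X Y →
        restrict (WOIPd T) X rfl = WOIPd (restrict T X rfl) ∧
        restrict (WOIPd T) Y rfl = WOIPd (restrict T Y rfl))) ∧
    ((IsTotalCut T X Y ↔ IsTotalCut (IWOIPid T) X Y) ∧
      (IsTotalCut T X Y →
        restrict (IWOIPid T) X rfl = IWOIPid (restrict T X rfl) ∧
        restrict (IWOIPid T) Y rfl = IWOIPid (restrict T Y rfl))) ∧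
    ((IsTotalCut T X Y ↔ IsTotalCut (DWOIPdd T) X Y) ∧
      (IsTotalCut T X Y →
        restrict (DWOIPdd T) X rfl = DWOIPdd (restrict T X rfl) ∧
        restrict (DWOIPdd T) Y rfl = DWOIPdd (restrict T Y rfl))) := by
  have hanti := hT.2.1
  exact ⟨respectsTotalCuts_WOIPd.isTotalCut_iff_and_restrict (fun _ hx => hx.1.1) hanti,
    respectsTotalCuts_IWOIPid.isTotalCut_iff_and_restrict Set.sdiff_subset hanti,
    respectsTotalCuts_DWOIPdd.isTotalCut_iff_and_restrict Set.sdiff_subset hanti⟩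

end IntegerRelations
end

section
/- Let R ∈ IRel_m and S ∈ IRel_n. Then the shifted shuffle R ⧢ S has cardinality exactly 2^{2mn}, and the convolution R ∗ S has cardinality exactly the binomial coefficient C(m+n, m). -/
namespace IntegerRelations

/-! ### Auxiliary material for Statement 19 -/

section Aux

variable {m n : ℕ}

/-- `lowHigh m n` is in bijection with `Fin m × Fin n`. -/
def lowHighEquiv (m n : ℕ) : lowHigh m n ≃ Fin m × Fin n where
  toFun x := (⟨x.1.1, x.2.1⟩, ⟨(x.1.2 : ℕ) - m, by
    have h1 := x.1.2.isLt; have h2 := x.2.2; omega⟩)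
  invFun p := ⟨(⟨p.1, by have := p.1.isLt; omega⟩, ⟨m + p.2, by have := p.2.isLt; omega⟩),
    ⟨p.1.isLt, Nat.le_add_right m p.2⟩⟩
  left_inv x := by
    obtain ⟨⟨a, b⟩, ha, hb⟩ := x
    apply Subtype.ext
    have hb' : m ≤ (b : ℕ) := hb
    refine Prod.ext (Fin.ext rfl) (Fin.ext ?_)
    show m + ((b : ℕ) - m) = b
    omega
  right_inv p := by
    refine Prod.ext (Fin.ext rfl) (Fin.ext ?_)
    show m + (p.2 : ℕ) - m = p.2
    omega

/-- `highLow m n` is in bijection with `Fin n × Fin m`. -/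
def highLowEquiv (m n : ℕ) : highLow m n ≃ Fin n × Fin m where
  toFun x := (⟨(x.1.1 : ℕ) - m, by
    have h1 := x.1.1.isLt; have h2 := x.2.1; omega⟩, ⟨x.1.2, x.2.2⟩)
  invFun p := ⟨(⟨m + p.1, by have := p.1.isLt; omega⟩, ⟨p.2, by have := p.2.isLt; omega⟩),
    ⟨Nat.le_add_right m p.1, p.2.isLt⟩⟩
  left_inv x := by
    obtain ⟨⟨a, b⟩, ha, hb⟩ := x
    apply Subtype.ext
    have ha' : m ≤ (a : ℕ) := ha
    refine Prod.ext (Fin.ext ?_) (Fin.ext rfl)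
    show m + ((a : ℕ) - m) = a
    omega
  right_inv p := by
    refine Prod.ext (Fin.ext ?_) (Fin.ext rfl)
    show m + (p.1 : ℕ) - m = p.1
    omega

/-- The parametrization of the shifted shuffle. -/
def shufMap (R : Set (Fin m × Fin m)) (S : Set (Fin n × Fin n))
    (p : Set (lowHigh m n) × Set (highLow m n)) : Set (Fin (m + n) × Fin (m + n)) :=
  shiftL R ∪ shiftR S ∪ (Subtype.val '' p.1) ∪ (Subtype.val '' p.2)

lemma union_inter_lowHigh (R : Set (Fin m × Fin m)) (S : Set (Fin n × Fin n))
    {A B : Set (Fin (m + n) × Fin (m + n))} (hA : A ⊆ lowHigh m n) (hB : B ⊆ highLow m n) :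
    (shiftL R ∪ shiftR S ∪ A ∪ B) ∩ lowHigh m n = A := by
  ext x
  simp only [Set.mem_inter_iff, Set.mem_union]
  constructor
  · rintro ⟨(((⟨y, hy, rfl⟩ | ⟨y, hy, rfl⟩) | hxA) | hxB), hlh⟩
    · exfalso
      have h1 : m ≤ ((Fin.castAdd n y.2 : Fin (m + n)) : ℕ) := hlh.2
      have h2 : (y.2 : ℕ) < m := y.2.isLt
      simp only [Fin.coe_castAdd] at h1
      omega
    · exfalso
      have h1 : ((Fin.natAdd m y.1 : Fin (m + n)) : ℕ) < m := hlh.1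
      simp only [Fin.coe_natAdd] at h1
      omega
    · exact hxA
    · exfalso
      have h1 := (hB hxB).1
      have h2 := hlh.1
      omega
  · exact fun hx => ⟨Or.inl (Or.inr hx), hA hx⟩

lemma union_inter_highLow (R : Set (Fin m × Fin m)) (S : Set (Fin n × Fin n))
    {A B : Set (Fin (m + n) × Fin (m + n))} (hA : A ⊆ lowHigh m n) (hB : B ⊆ highLow m n) :
    (shiftL R ∪ shiftR S ∪ A ∪ B) ∩ highLow m n = B := by
  ext x
  simp only [Set.mem_inter_iff, Set.mem_union]
  constructor
  · rintro ⟨(((⟨y, hy, rfl⟩ | ⟨y, hy, rfl⟩) | hxA) | hxB), hlh⟩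
    · exfalso
      have h1 : m ≤ ((Fin.castAdd n y.1 : Fin (m + n)) : ℕ) := hlh.1
      have h2 : (y.1 : ℕ) < m := y.1.isLt
      simp only [Fin.coe_castAdd] at h1
      omega
    · exfalso
      have h1 : ((Fin.natAdd m y.2 : Fin (m + n)) : ℕ) < m := hlh.2
      simp only [Fin.coe_natAdd] at h1
      omega
    · exfalso
      have h1 := (hA hxA).1
      have h2 := hlh.1
      omega
    · exact hxB
  · exact fun hx => ⟨Or.inr hx, hB hx⟩

lemma shufMap_injective (R : Set (Fin m × Fin m)) (S : Set (Fin n × Fin n)) :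
    Function.Injective (shufMap R S) := by
  rintro ⟨I, D⟩ ⟨I', D'⟩ h
  have hmem : ∀ (p : Set (lowHigh m n) × Set (highLow m n)),
      Subtype.val '' p.1 ⊆ lowHigh m n ∧ Subtype.val '' p.2 ⊆ highLow m n := by
    intro p
    constructor <;> exact Subtype.coe_image_subset _ _
  have hI : Subtype.val '' I = Subtype.val '' I' := by
    have h1 := congrArg (· ∩ lowHigh m n) h
    simpa only [shufMap, union_inter_lowHigh R S (hmem (I, D)).1 (hmem (I, D)).2,
      union_inter_lowHigh R S (hmem (I', D')).1 (hmem (I', D')).2] using h1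
  have hD : Subtype.val '' D = Subtype.val '' D' := by
    have h1 := congrArg (· ∩ highLow m n) h
    simpa only [shufMap, union_inter_highLow R S (hmem (I, D)).1 (hmem (I, D)).2,
      union_inter_highLow R S (hmem (I', D')).1 (hmem (I', D')).2] using h1
  have e1 : I = I' := Set.image_injective.mpr Subtype.coe_injective hI
  have e2 : D = D' := Set.image_injective.mpr Subtype.coe_injective hD
  rw [Prod.ext_iff]
  exact ⟨e1, e2⟩

lemma range_shufMap (R : Set (Fin m × Fin m)) (S : Set (Fin n × Fin n)) :
    Set.range (shufMap R S) = shiftedShuffle R S := by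
  ext T
  constructor
  · rintro ⟨⟨I, D⟩, rfl⟩
    exact ⟨Subtype.val '' I, Subtype.val '' D, Subtype.coe_image_subset _ _,
      Subtype.coe_image_subset _ _, rfl⟩
  · rintro ⟨I, D, hI, hD, rfl⟩
    refine ⟨(Subtype.val ⁻¹' I, Subtype.val ⁻¹' D), ?_⟩
    unfold shufMap
    rw [Set.image_preimage_eq_of_subset (by rwa [Subtype.range_coe]),
      Set.image_preimage_eq_of_subset (by rwa [Subtype.range_coe])]

lemma card_compl_of_card {X : Finset (Fin (m + n))} (hX : X.card = m) : Xᶜ.card = n := by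
  rw [Finset.card_compl, hX, Fintype.card_fin]
  omega

/-- The canonical element of the convolution associated with a cut set `X`. -/
def buildT (R : Set (Fin m × Fin m)) (S : Set (Fin n × Fin n))
    (X : Finset (Fin (m + n))) (hX : X.card = m) (hXc : Xᶜ.card = n) :
    Set (Fin (m + n) × Fin (m + n)) :=
  {x | (∃ (h1 : x.1 ∈ X) (h2 : x.2 ∈ X),
        ((X.orderIsoOfFin hX).symm ⟨x.1, h1⟩, (X.orderIsoOfFin hX).symm ⟨x.2, h2⟩) ∈ R) ∨
      (∃ (h1 : x.1 ∈ Xᶜ) (h2 : x.2 ∈ Xᶜ),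
        ((Xᶜ.orderIsoOfFin hXc).symm ⟨x.1, h1⟩, (Xᶜ.orderIsoOfFin hXc).symm ⟨x.2, h2⟩) ∈ S) ∨
      (x.1 ∈ X ∧ x.2 ∈ Xᶜ)}

/-- The parametrization of the convolution. -/
def convMap (R : Set (Fin m × Fin m)) (S : Set (Fin n × Fin n))
    (X : {X : Finset (Fin (m + n)) // X.card = m}) : Set (Fin (m + n) × Fin (m + n)) :=
  buildT R S X.1 X.2 (card_compl_of_card X.2)

lemma restrict_buildT_left (R : Set (Fin m × Fin m)) (S : Set (Fin n × Fin n))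
    (X : Finset (Fin (m + n))) (hX : X.card = m) (hXc : Xᶜ.card = n) :
    restrict (buildT R S X hX hXc) X hX = R := by
  ext ⟨i, j⟩
  simp only [restrict, Set.mem_setOf_eq, buildT]
  constructor
  · rintro (⟨h1, h2, hmem⟩ | ⟨h1, _, _⟩ | ⟨_, h2⟩)
    · have e1 : (⟨(X.orderIsoOfFin hX i : Fin (m + n)), h1⟩ : {x // x ∈ X}) =
          X.orderIsoOfFin hX i := Subtype.ext rfl
      have e2 : (⟨(X.orderIsoOfFin hX j : Fin (m + n)), h2⟩ : {x // x ∈ X}) =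
          X.orderIsoOfFin hX j := Subtype.ext rfl
      rwa [e1, e2, OrderIso.symm_apply_apply, OrderIso.symm_apply_apply] at hmem
    · exact absurd (X.orderIsoOfFin hX i).2 (Finset.mem_compl.mp h1)
    · exact absurd (X.orderIsoOfFin hX j).2 (Finset.mem_compl.mp h2)
  · intro hij
    refine Or.inl ⟨(X.orderIsoOfFin hX i).2, (X.orderIsoOfFin hX j).2, ?_⟩
    have e1 : (⟨(X.orderIsoOfFin hX i : Fin (m + n)), (X.orderIsoOfFin hX i).2⟩ :
        {x // x ∈ X}) = X.orderIsoOfFin hX i := Subtype.ext rfl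
    have e2 : (⟨(X.orderIsoOfFin hX j : Fin (m + n)), (X.orderIsoOfFin hX j).2⟩ :
        {x // x ∈ X}) = X.orderIsoOfFin hX j := Subtype.ext rfl
    rwa [e1, e2, OrderIso.symm_apply_apply, OrderIso.symm_apply_apply]

lemma restrict_buildT_right (R : Set (Fin m × Fin m)) (S : Set (Fin n × Fin n))
    (X : Finset (Fin (m + n))) (hX : X.card = m) (hXc : Xᶜ.card = n) :
    restrict (buildT R S X hX hXc) Xᶜ hXc = S := by
  ext ⟨i, j⟩
  simp only [restrict, Set.mem_setOf_eq, buildT]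
  constructor
  · rintro (⟨h1, _, _⟩ | ⟨h1, h2, hmem⟩ | ⟨h1, _⟩)
    · exact absurd h1 (Finset.mem_compl.mp (Xᶜ.orderIsoOfFin hXc i).2)
    · have e1 : (⟨((Xᶜ).orderIsoOfFin hXc i : Fin (m + n)), h1⟩ : {x // x ∈ Xᶜ}) =
          (Xᶜ).orderIsoOfFin hXc i := Subtype.ext rfl
      have e2 : (⟨((Xᶜ).orderIsoOfFin hXc j : Fin (m + n)), h2⟩ : {x // x ∈ Xᶜ}) =
          (Xᶜ).orderIsoOfFin hXc j := Subtype.ext rfl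
      rwa [e1, e2, OrderIso.symm_apply_apply, OrderIso.symm_apply_apply] at hmem
    · exact absurd h1 (Finset.mem_compl.mp (Xᶜ.orderIsoOfFin hXc i).2)
  · intro hij
    refine Or.inr (Or.inl ⟨(Xᶜ.orderIsoOfFin hXc i).2, (Xᶜ.orderIsoOfFin hXc j).2, ?_⟩)
    have e1 : (⟨((Xᶜ).orderIsoOfFin hXc i : Fin (m + n)), (Xᶜ.orderIsoOfFin hXc i).2⟩ :
        {x // x ∈ Xᶜ}) = (Xᶜ).orderIsoOfFin hXc i := Subtype.ext rfl
    have e2 : (⟨((Xᶜ).orderIsoOfFin hXc j : Fin (m + n)), (Xᶜ.orderIsoOfFin hXc j).2⟩ :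
        {x // x ∈ Xᶜ}) = (Xᶜ).orderIsoOfFin hXc j := Subtype.ext rfl
    rwa [e1, e2, OrderIso.symm_apply_apply, OrderIso.symm_apply_apply]

lemma buildT_isTotalCut (R : Set (Fin m × Fin m)) (S : Set (Fin n × Fin n))
    (X : Finset (Fin (m + n))) (hX : X.card = m) (hXc : Xᶜ.card = n) :
    IsTotalCut (buildT R S X hX hXc) X Xᶜ := by
  refine ⟨fun i => ?_, disjoint_compl_right, fun x hx y hy => ?_⟩
  · by_cases h : i ∈ X
    · exact Or.inl h
    · exact Or.inr (Finset.mem_compl.mpr h)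
  · refine ⟨Or.inr (Or.inr ⟨hx, hy⟩), ?_⟩
    rintro (⟨h1, _, _⟩ | ⟨_, h2, _⟩ | ⟨h1, _⟩)
    · exact Finset.mem_compl.mp hy h1
    · exact Finset.mem_compl.mp h2 hx
    · exact Finset.mem_compl.mp hy h1

lemma convMap_injective (R : Set (Fin m × Fin m)) (S : Set (Fin n × Fin n)) :
    Function.Injective (convMap R S) := by
  rintro ⟨X, hX⟩ ⟨X', hX'⟩ h
  ext1
  by_contra hne
  have hXX' : ¬ X ⊆ X' := by
    intro hsub
    exact hne (Finset.eq_of_subset_of_card_le hsub (by rw [hX, hX']))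
  have hX'X : ¬ X' ⊆ X := by
    intro hsub
    exact hne (Finset.eq_of_subset_of_card_le hsub (by rw [hX, hX'])).symm
  obtain ⟨a, haX, haX'⟩ := Finset.not_subset.mp hXX'
  obtain ⟨b, hbX', hbX⟩ := Finset.not_subset.mp hX'X
  have hab : (a, b) ∈ convMap R S ⟨X, hX⟩ :=
    Or.inr (Or.inr ⟨haX, Finset.mem_compl.mpr hbX⟩)
  rw [h] at hab
  rcases hab with ⟨h1, _, _⟩ | ⟨_, h2, _⟩ | ⟨h1, _⟩
  · exact haX' h1
  · exact Finset.mem_compl.mp h2 hbX'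
  · exact haX' h1

lemma range_convMap (R : Set (Fin m × Fin m)) (S : Set (Fin n × Fin n)) :
    Set.range (convMap R S) = convolution R S := by
  ext T
  constructor
  · rintro ⟨⟨X, hX⟩, rfl⟩
    exact ⟨X, Xᶜ, hX, card_compl_of_card hX, buildT_isTotalCut R S X hX _,
      restrict_buildT_left R S X hX _, restrict_buildT_right R S X hX _⟩
  · rintro ⟨X, Y, hX, hY, ⟨hcov, hdisj, hcut⟩, hrX, hrY⟩
    have hYc : Y = Xᶜ := by
      ext i
      rw [Finset.mem_compl]
      constructor
      · intro hiY hiX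
        exact Finset.disjoint_left.mp hdisj hiX hiY
      · intro hiX
        rcases hcov i with h | h
        · exact absurd h hiX
        · exact h
    subst hYc
    refine ⟨⟨X, hX⟩, ?_⟩
    show buildT R S X hX (card_compl_of_card hX) = T
    have hXc : Xᶜ.card = n := card_compl_of_card hX
    ext ⟨a, b⟩
    by_cases ha : a ∈ X <;> by_cases hb : b ∈ X
    · -- both in X: governed by R = restrict T X
      have key : (a, b) ∈ T ↔
          ((X.orderIsoOfFin hX).symm ⟨a, ha⟩, (X.orderIsoOfFin hX).symm ⟨b, hb⟩) ∈ R := by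
        rw [← hrX]
        simp only [restrict, Set.mem_setOf_eq, OrderIso.apply_symm_apply]
      constructor
      · rintro (⟨h1, h2, hmem⟩ | ⟨h1, _, _⟩ | ⟨_, h2⟩)
        · exact key.mpr hmem
        · exact absurd ha (Finset.mem_compl.mp h1)
        · exact absurd hb (Finset.mem_compl.mp h2)
      · intro hT
        exact Or.inl ⟨ha, hb, key.mp hT⟩
    · -- a ∈ X, b ∉ X
      have hb' : b ∈ Xᶜ := Finset.mem_compl.mpr hb
      constructor
      · intro _
        exact (hcut a ha b hb').1
      · intro _
        exact Or.inr (Or.inr ⟨ha, hb'⟩)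
    · -- a ∉ X, b ∈ X
      have ha' : a ∈ Xᶜ := Finset.mem_compl.mpr ha
      constructor
      · rintro (⟨h1, _, _⟩ | ⟨_, h2, _⟩ | ⟨h1, _⟩)
        · exact absurd h1 ha
        · exact absurd hb (Finset.mem_compl.mp h2)
        · exact absurd h1 ha
      · intro hT
        exact absurd hT (hcut b hb a ha').2
    · -- both in Xᶜ: governed by S = restrict T Xᶜ
      have ha' : a ∈ Xᶜ := Finset.mem_compl.mpr ha
      have hb' : b ∈ Xᶜ := Finset.mem_compl.mpr hb
      have key : (a, b) ∈ T ↔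
          ((Xᶜ.orderIsoOfFin hXc).symm ⟨a, ha'⟩, (Xᶜ.orderIsoOfFin hXc).symm ⟨b, hb'⟩) ∈ S := by
        rw [← hrY]
        simp only [restrict, Set.mem_setOf_eq, OrderIso.apply_symm_apply]
      constructor
      · rintro (⟨h1, _, _⟩ | ⟨h1, h2, hmem⟩ | ⟨h1, _⟩)
        · exact absurd h1 ha
        · exact key.mpr hmem
        · exact absurd h1 ha
      · intro hT
        exact Or.inr (Or.inl ⟨ha', hb', key.mp hT⟩)

end Aux

/-- cardinality of the shifted shuffle and of the convolution. -/
theorem shiftedShuffle_convolution_card (m n : ℕ)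
    (R : Set (Fin m × Fin m)) (S : Set (Fin n × Fin n))
    (hR : IsIRel R) (hS : IsIRel S) :
    (shiftedShuffle R S).ncard = 2 ^ (2 * m * n) ∧
    (convolution R S).ncard = (m + n).choose m := by
  constructor
  · rw [← range_shufMap R S]
    have h1 : (Set.range (shufMap R S)).ncard =
        Nat.card (Set (lowHigh m n) × Set (highLow m n)) :=
      Nat.card_range_of_injective (shufMap_injective R S)
    rw [h1, Nat.card_prod,
      Nat.card_congr (Equiv.Set.congr (lowHighEquiv m n)),
      Nat.card_congr (Equiv.Set.congr (highLowEquiv m n))]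
    simp only [Nat.card_eq_fintype_card, Fintype.card_set, Fintype.card_prod,
      Fintype.card_fin, ← pow_mul, ← pow_add]
    congr 1
    ring
  · rw [← range_convMap R S]
    have h1 : (Set.range (convMap R S)).ncard =
        Nat.card {X : Finset (Fin (m + n)) // X.card = m} :=
      Nat.card_range_of_injective (convMap_injective R S)
    rw [h1, Nat.card_eq_fintype_card, Fintype.card_finset_len, Fintype.card_fin]

end IntegerRelations
end
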